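/- arXiv:2110.04515 — 8 statements merged into one kernel-verified Lean document; each statement's English description precedes it below -/
import Mathlib

section
/- If F is a compact subset of ℝ^p and f : F → ℝ is c-Hölder-α (i.e. |f(x)-f(y)| ≤ c·|x-y|^α for all x,y ∈ F), then for every ε > 0 there exists a function g : F → ℝ that is both c-Hölder-α and K-Lipschitz for some K > 0, with ‖f - g‖_∞ < ε. -/
open Set Metric

noncomputable section

abbrev Euc (p : ℕ) := EuclideanSpace ℝ (Fin p)

private lemma omega_mono {c K α : ℝ} (hc : 0 ≤ c) (hK : 0 ≤ K) (hα : 0 ≤ α)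
    {s t : ℝ} (hs : 0 ≤ s) (hst : s ≤ t) :
    min (c * s ^ α) (K * s) ≤ min (c * t ^ α) (K * t) := by
  apply min_le_min
  · gcongr
  · gcongr

private lemma omega_subadd {c K α : ℝ} (hc : 0 < c) (hK : 0 < K) (hα : 0 < α) (hα1 : α ≤ 1)
    {d1 d2 e : ℝ} (hd1 : 0 ≤ d1) (hd2 : 0 ≤ d2) (he : 0 ≤ e) (h : d1 ≤ d2 + e) :
    min (c * d1 ^ α) (K * d1) ≤ min (c * d2 ^ α) (K * d2) + min (c * e ^ α) (K * e) := by
  have step1 : min (c * d1 ^ α) (K * d1) ≤ min (c * (d2 + e) ^ α) (K * (d2 + e)) :=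
    omega_mono hc.le hK.le hα.le hd1 h
  refine step1.trans ?_
  rcases eq_or_lt_of_le hd2 with h2 | h2
  · simp [← h2, Real.zero_rpow hα.ne']
  rcases eq_or_lt_of_le he with h3 | h3
  · simp [← h3, Real.zero_rpow hα.ne']
  set S := d2 + e with hS
  have hSpos : 0 < S := by positivity
  have hMnn : 0 ≤ min (c * S ^ α) (K * S) := by
    apply le_min <;> positivity
  have hfrac : ∀ s : ℝ, 0 < s → s ≤ S →
      s / S * min (c * S ^ α) (K * S) ≤ min (c * s ^ α) (K * s) := by
    intro s hs hsS
    have h01 : 0 < s / S := div_pos hs hSpos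
    have h1 : s / S ≤ 1 := (div_le_one hSpos).2 hsS
    apply le_min
    · calc s / S * min (c * S ^ α) (K * S) ≤ s / S * (c * S ^ α) := by
            gcongr
            exact min_le_left _ _
        _ ≤ (s / S) ^ α * (c * S ^ α) := by
            gcongr
            calc s / S = (s / S) ^ (1 : ℝ) := (Real.rpow_one _).symm
              _ ≤ (s / S) ^ α := Real.rpow_le_rpow_of_exponent_ge h01 h1 hα1
        _ = c * ((s / S) ^ α * S ^ α) := by ring
        _ = c * (s / S * S) ^ α := by rw [Real.mul_rpow h01.le hSpos.le]
        _ = c * s ^ α := by rw [div_mul_cancel₀ _ hSpos.ne']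
    · calc s / S * min (c * S ^ α) (K * S) ≤ s / S * (K * S) := by
            gcongr
            exact min_le_right _ _
        _ = K * (s / S * S) := by ring
        _ = K * s := by rw [div_mul_cancel₀ _ hSpos.ne']
  have h2' := hfrac d2 h2 (by simp [hS, he])
  have h3' := hfrac e h3 (by simp [hS, hd2])
  have hsum : d2 / S * min (c * S ^ α) (K * S) + e / S * min (c * S ^ α) (K * S)
      = min (c * S ^ α) (K * S) := by
    rw [← add_mul, ← add_div, div_self hSpos.ne', one_mul]
  linarith

theorem stmt0 (p : ℕ) (F : Set (Euc p)) (hF : IsCompact F) (c α : ℝ)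
    (hα : 0 < α) (hα1 : α ≤ 1) (hc : 0 < c) (f : Euc p → ℝ)
    (hf : ∀ x ∈ F, ∀ y ∈ F, |f x - f y| ≤ c * dist x y ^ α)
    (ε : ℝ) (hε : 0 < ε) :
    ∃ g : Euc p → ℝ,
      (∀ x ∈ F, ∀ y ∈ F, |g x - g y| ≤ c * dist x y ^ α) ∧
      (∃ K > (0:ℝ), ∀ x ∈ F, ∀ y ∈ F, |g x - g y| ≤ K * dist x y) ∧
      (∀ x ∈ F, |f x - g x| < ε) := by
  rcases F.eq_empty_or_nonempty with rfl | hne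
  · exact ⟨f, by simp, ⟨1, one_pos, by simp⟩, by simp⟩
  obtain ⟨x0, hx0⟩ := hne
  haveI : Nonempty F := ⟨⟨x0, hx0⟩⟩
  obtain ⟨D, hD⟩ := Metric.isBounded_iff.1 hF.isBounded
  have hD0 : 0 ≤ D := le_trans (by simp [dist_self]) (hD hx0 hx0)
  -- choose τ and K
  set m : ℝ := min 1 (ε / (2 * c)) with hm_def
  have hm : 0 < m := lt_min one_pos (by positivity)
  set τ : ℝ := m ^ (1 / α : ℝ) with hτ_def
  have hτ : 0 < τ := Real.rpow_pos_of_pos hm _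
  have hτα : τ ^ α = m := by
    rw [hτ_def, ← Real.rpow_mul hm.le, one_div, inv_mul_cancel₀ hα.ne', Real.rpow_one]
  set K : ℝ := c * τ ^ (α - 1) with hK_def
  have hKpos : 0 < K := by
    have := Real.rpow_pos_of_pos hτ (α - 1)
    positivity
  have hcτ : c * τ ^ α ≤ ε / 2 := by
    rw [hτα]
    calc c * m ≤ c * (ε / (2 * c)) := by
          gcongr
          exact min_le_right _ _
      _ = ε / 2 := by field_simp
  have hK2 : ∀ t : ℝ, 0 ≤ t → c * t ^ α ≤ K * t + ε / 2 := by
    intro t ht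
    rcases le_total t τ with h | h
    · have h1 : c * t ^ α ≤ c * τ ^ α := by gcongr
      have h2 : 0 ≤ K * t := by positivity
      linarith
    · have htpos : 0 < t := lt_of_lt_of_le hτ h
      have h1 : t ^ (α - 1) ≤ τ ^ (α - 1) :=
        Real.rpow_le_rpow_of_nonpos hτ h (by linarith)
      have h2 : t ^ α = t ^ (α - 1) * t := by
        rw [show α = (α - 1) + 1 by ring, Real.rpow_add_one htpos.ne']
        rw [show (α - 1 : ℝ) + 1 - 1 = α - 1 by ring]
      have h3 : c * t ^ α ≤ K * t := by
        rw [h2, hK_def]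
        calc c * (t ^ (α - 1) * t) = c * t ^ (α - 1) * t := by ring
          _ ≤ c * τ ^ (α - 1) * t := by gcongr
      linarith
  -- the modulus ω and the function g
  set ω : ℝ → ℝ := fun t => min (c * t ^ α) (K * t) with hω_def
  have hω0 : ω 0 = 0 := by simp [hω_def, Real.zero_rpow hα.ne']
  have hωnn : ∀ t : ℝ, 0 ≤ t → 0 ≤ ω t := by
    intro t ht
    apply le_min <;> positivity
  have bdd : ∀ x : Euc p, BddBelow (Set.range fun y : F => f ↑y + ω (dist x ↑y)) := by
    intro x
    refine ⟨f x0 - c * D ^ α, ?_⟩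
    rintro r ⟨⟨y, hy⟩, rfl⟩
    have h1 : |f x0 - f y| ≤ c * dist x0 y ^ α := hf x0 hx0 y hy
    have h2 : c * dist x0 y ^ α ≤ c * D ^ α := by
      gcongr
      exact hD hx0 hy
    have h3 := hωnn (dist x y) dist_nonneg
    have := abs_le.1 h1
    simp only [ge_iff_le]
    linarith [this.1]
  set g : Euc p → ℝ := fun x => ⨅ y : F, (f ↑y + ω (dist x ↑y)) with hg_def
  have hgle : ∀ x ∈ F, g x ≤ f x := by
    intro x hx
    have := ciInf_le (bdd x) (⟨x, hx⟩ : F)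
    simpa [hg_def, dist_self, hω0] using this
  have hfg : ∀ x ∈ F, f x - g x ≤ ε / 2 := by
    intro x hx
    have : f x - ε / 2 ≤ g x := by
      apply le_ciInf
      rintro ⟨y, hy⟩
      have h1 : |f x - f y| ≤ c * dist x y ^ α := hf x hx y hy
      have h2 := (abs_le.1 h1).2
      have h3 : c * dist x y ^ α - ε / 2 ≤ ω (dist x y) := by
        apply le_min
        · linarith [hK2 (dist x y) dist_nonneg]
        · linarith [hK2 (dist x y) dist_nonneg]
      simp only
      linarith
    linarith
  have hmod : ∀ x x' : Euc p, g x ≤ g x' + ω (dist x x') := by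
    intro x x'
    have : g x - ω (dist x x') ≤ g x' := by
      apply le_ciInf
      rintro ⟨y, hy⟩
      have h1 : g x ≤ f y + ω (dist x y) := ciInf_le (bdd x) (⟨y, hy⟩ : F)
      have h2 : ω (dist x y) ≤ ω (dist x' y) + ω (dist x x') := by
        apply omega_subadd hc hKpos hα hα1 dist_nonneg dist_nonneg dist_nonneg
        calc dist x y ≤ dist x x' + dist x' y := dist_triangle x x' y
          _ = dist x' y + dist x x' := by ring
      simp only
      linarith
    linarith
  have habs : ∀ x x' : Euc p, |g x - g x'| ≤ ω (dist x x') := by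
    intro x x'
    rw [abs_sub_le_iff]
    constructor
    · linarith [hmod x x']
    · have := hmod x' x
      rw [dist_comm x' x] at this
      linarith
  refine ⟨g, ?_, ⟨K, hKpos, ?_⟩, ?_⟩
  · intro x hx y hy
    exact (habs x y).trans (min_le_left _ _)
  · intro x hx y hy
    exact (habs x y).trans (min_le_right _ _)
  · intro x hx
    have h1 := hgle x hx
    have h2 := hfg x hx
    rw [abs_of_nonneg (by linarith)]
    linarith
end
end

section
/- Let S ⊆ ℝ^p be a non-degenerate p-simplex with vertices x_0, …, x_p, and let f̃ : {x_0, …, x_p} → ℝ be K-Lipschitz on the vertex set. Let a be the length of the longest edge of S and b = min_i b_i, where b_i is the distance from x_i to the affine hyperplane spanned by the other vertices. Then the affine-extension f̄ : S → ℝ defined by f̄(Σ γ_i x_i) = Σ γ_i f̃(x_i) (for convex combinations Σ γ_i x_i) is M-Lipschitz with M = (p+1)·K·(a/b). -/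
open Set Metric

noncomputable section

theorem stmt2 (p : ℕ) (K a b : ℝ) (hK : 0 < K) (hb : 0 < b)
    (x : Fin (p + 1) → Euc p) (hx : AffineIndependent ℝ x)
    (φ : Fin (p + 1) → ℝ)
    (hφ : ∀ i j, |φ i - φ j| ≤ K * dist (x i) (x j))
    (ha : IsGreatest {d : ℝ | ∃ i j, i ≠ j ∧ d = dist (x i) (x j)} a)
    (hbleast : IsLeast {d : ℝ | ∃ i, d =
        Metric.infDist (x i) (affineSpan ℝ (x '' {j | j ≠ i}) : Set (Euc p))} b)
    (γ γ' : Fin (p + 1) → ℝ)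
    (hγ : ∀ i, 0 ≤ γ i) (hγ1 : ∑ i, γ i = 1)
    (hγ' : ∀ i, 0 ≤ γ' i) (hγ'1 : ∑ i, γ' i = 1) :
    |(∑ i, γ i * φ i) - ∑ i, γ' i * φ i| ≤
      (((p : ℝ) + 1) * K * (a / b)) * dist (∑ i, γ i • x i) (∑ i, γ' i • x i) := by
  classical
  have hcard : Fintype.card (Fin (p + 1)) = Module.finrank ℝ (Euc p) + 1 := by
    simp [finrank_euclideanSpace_fin]
  have htot : affineSpan ℝ (Set.range x) = ⊤ :=
    hx.affineSpan_eq_top_iff_card_eq_finrank_add_one.mpr hcard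
  let B : AffineBasis (Fin (p + 1)) ℝ (Euc p) := ⟨x, hx, htot⟩
  have hBx : ∀ i, B i = x i := fun _ => rfl
  -- key: the linear part of each barycentric coordinate has norm ≤ 1/b
  have key : ∀ (i : Fin (p + 1)) (v : Euc p), b * |(B.coord i).linear v| ≤ ‖v‖ := by
    intro i v
    rcases eq_or_ne ((B.coord i).linear v) 0 with h0 | h0
    · rw [h0]; simp
    · set t : ℝ := (B.coord i).linear v with ht
      set z : Euc p := x i - t⁻¹ • v with hzdef
      have hzi : B.coord i z = 0 := by
        have h1 : (B.coord i).linear (z -ᵥ x i) = B.coord i z -ᵥ B.coord i (x i) :=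
          (B.coord i).linearMap_vsub z (x i)
        have h2 : (z : Euc p) -ᵥ x i = -(t⁻¹ • v) := by
          simp [hzdef, vsub_eq_sub]
        have h3 : B.coord i (x i) = 1 := by
          have h := B.coord_apply i i
          rw [if_pos rfl] at h
          exact h
        rw [h2, map_neg, map_smul] at h1
        simp only [vsub_eq_sub, h3, smul_eq_mul, ← ht] at h1
        have : -(t⁻¹ * t) = B.coord i z - 1 := h1
        rw [inv_mul_cancel₀ h0] at this
        linarith
      have hw1 : ∑ j ∈ Finset.univ.erase i, B.coord j z = 1 := by
        have := B.sum_coord_apply_eq_one z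
        rw [← Finset.add_sum_erase _ _ (Finset.mem_univ i)] at this
        rw [hzi] at this; linarith
      have hzc : z = (Finset.univ.erase i).affineCombination ℝ x (fun j => B.coord j z) := by
        have h5 : Finset.univ.affineCombination ℝ x (fun j => B.coord j z) = z :=
          B.affineCombination_coord_eq_self z
        have h6 : Set.indicator (↑(Finset.univ.erase i)) (fun j => B.coord j z) =
            (fun j => B.coord j z) := by
          funext j
          rcases eq_or_ne j i with rfl | hj
          · simp [Set.indicator, hzi]
          · simp [Set.indicator, hj]
        rw [Finset.affineCombination_indicator_subset _ _
          (Finset.subset_univ (Finset.univ.erase i)), h6, h5]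
      have hsm : ((Finset.univ : Finset {j : Fin (p + 1) // j ≠ i}).map
          (Function.Embedding.subtype _)) = Finset.univ.erase i := by
        ext j; simp
      have hw1' : ∑ j ∈ (Finset.univ : Finset {j : Fin (p + 1) // j ≠ i}),
          (fun j : {j : Fin (p + 1) // j ≠ i} => B.coord j.1 z) j = 1 := by
        rw [← hw1, ← hsm, Finset.sum_map]; rfl
      have hmemH : z ∈ (affineSpan ℝ (x '' {j | j ≠ i}) : Set (Euc p)) := by
        have hmem := affineCombination_mem_affineSpan hw1'
          (fun j : {j : Fin (p + 1) // j ≠ i} => x j.1)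
        have hr : Set.range (fun j : {j : Fin (p + 1) // j ≠ i} => x j.1) =
            x '' {j | j ≠ i} := by
          rw [show (fun j : {j : Fin (p + 1) // j ≠ i} => x j.1) = x ∘ Subtype.val from rfl,
            Set.range_comp, Subtype.range_coe_subtype]
        have hcomb : (Finset.univ.erase i).affineCombination ℝ x (fun j => B.coord j z) =
            (Finset.univ : Finset {j : Fin (p + 1) // j ≠ i}).affineCombination ℝ
              (fun j : {j : Fin (p + 1) // j ≠ i} => x j.1)
              (fun j : {j : Fin (p + 1) // j ≠ i} => B.coord j.1 z) := by
          rw [← hsm, Finset.affineCombination_map]; rfl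
        rw [hzc, hcomb]
        rw [hr] at hmem
        exact hmem
      have hble : b ≤ Metric.infDist (x i) (affineSpan ℝ (x '' {j | j ≠ i}) : Set (Euc p)) :=
        hbleast.2 ⟨i, rfl⟩
      have hdle : Metric.infDist (x i) (affineSpan ℝ (x '' {j | j ≠ i}) : Set (Euc p)) ≤
          dist (x i) z := Metric.infDist_le_dist_of_mem hmemH
      have hdz : dist (x i) z = |t|⁻¹ * ‖v‖ := by
        rw [dist_eq_norm, hzdef]
        simp [norm_smul, abs_inv]
      have habs : 0 < |t| := abs_pos.mpr h0
      have : b ≤ |t|⁻¹ * ‖v‖ := le_trans (hble.trans hdle) (le_of_eq hdz)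
      calc b * |t| ≤ (|t|⁻¹ * ‖v‖) * |t| := by
            exact mul_le_mul_of_nonneg_right this habs.le
        _ = ‖v‖ := by field_simp
  set y := ∑ i, γ i • x i with hy
  set y' := ∑ i, γ' i • x i with hy'
  have hcoord : ∀ i, B.coord i y = γ i := by
    intro i
    have h1 : y = Finset.univ.affineCombination ℝ x γ :=
      (Finset.univ.affineCombination_eq_linear_combination x γ hγ1).symm
    rw [h1]
    exact B.coord_apply_combination_of_mem (Finset.mem_univ i) hγ1
  have hcoord' : ∀ i, B.coord i y' = γ' i := by
    intro i
    have h1 : y' = Finset.univ.affineCombination ℝ x γ' :=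
      (Finset.univ.affineCombination_eq_linear_combination x γ' hγ'1).symm
    rw [h1]
    exact B.coord_apply_combination_of_mem (Finset.mem_univ i) hγ'1
  have hdiff : ∀ i, |γ i - γ' i| ≤ dist y y' / b := by
    intro i
    have h1 : (B.coord i).linear (y -ᵥ y') = B.coord i y -ᵥ B.coord i y' :=
      (B.coord i).linearMap_vsub y y'
    have h2 : |γ i - γ' i| = |(B.coord i).linear (y - y')| := by
      rw [← vsub_eq_sub y y', h1, vsub_eq_sub, hcoord, hcoord']
    rw [h2, le_div_iff₀ hb, mul_comm]
    calc b * |(B.coord i).linear (y - y')| ≤ ‖y - y'‖ := key i (y - y')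
      _ = dist y y' := (dist_eq_norm y y').symm
  obtain ⟨i0, j0, hij0, ha0⟩ := ha.1
  have ha_nonneg : 0 ≤ a := ha0 ▸ dist_nonneg
  have hKa : 0 ≤ K * a := mul_nonneg hK.le ha_nonneg
  have hφb : ∀ i, |φ i - φ 0| ≤ K * a := by
    intro i
    rcases eq_or_ne i 0 with rfl | h
    · simpa using hKa
    · exact (hφ i 0).trans (mul_le_mul_of_nonneg_left (ha.2 ⟨i, 0, h, rfl⟩) hK.le)
  have hsum0 : ∑ i, (γ i - γ' i) = 0 := by
    rw [Finset.sum_sub_distrib, hγ1, hγ'1]; ring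
  have heq : (∑ i, γ i * φ i) - ∑ i, γ' i * φ i = ∑ i, (γ i - γ' i) * (φ i - φ 0) := by
    have e1 : ∀ i : Fin (p + 1), (γ i - γ' i) * (φ i - φ 0)
        = (γ i * φ i - γ' i * φ i) - (γ i - γ' i) * φ 0 := by intro i; ring
    simp only [e1]
    rw [Finset.sum_sub_distrib, Finset.sum_sub_distrib, ← Finset.sum_mul, hsum0]
    ring
  rw [heq]
  have hdnn : (0:ℝ) ≤ dist y y' / b := div_nonneg dist_nonneg hb.le
  calc |∑ i, (γ i - γ' i) * (φ i - φ 0)| ≤ ∑ i, |(γ i - γ' i) * (φ i - φ 0)| :=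
        Finset.abs_sum_le_sum_abs _ _
    _ ≤ ∑ _i : Fin (p + 1), (dist y y' / b) * (K * a) := by
        apply Finset.sum_le_sum
        intro i _
        rw [abs_mul]
        exact mul_le_mul (hdiff i) (hφb i) (abs_nonneg _) hdnn
    _ = ((p : ℝ) + 1) * ((dist y y' / b) * (K * a)) := by
        rw [Finset.sum_const, Finset.card_univ]
        simp [nsmul_eq_mul]
    _ = (((p : ℝ) + 1) * K * (a / b)) * dist y y' := by ring
end
end

section
/- Let S be a non-degenerate p-simplex with vertices x_0,…,x_p, and let x = Σ γ_i x_i, x' = Σ γ_i' x_i be two points of S written as convex combinations. Then |x - x'| ≥ |γ_0 - γ_0'|·b_0, where b_0 is the distance from x_0 to the affine hyperplane spanned by x_1,…,x_p. -/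
/-!
If the weights `δ` sum to zero and `δ i₀ ≠ 0`, then rescaling the vector `∑ δ i • x i` by
`(δ i₀)⁻¹` and subtracting it from `x i₀` yields an affine combination of the remaining vertices,
i.e. a point of the opposite face. Hence `‖∑ δ i • x i‖ = |δ i₀| · dist (x i₀, z)` for some `z` in
that face, which is at least `|δ i₀|` times the distance from `x i₀` to the face. Apply this to
`δ = γ - γ'`.
-/

open Set Metric

noncomputable section

section

variable {ι V P : Type*} [Fintype ι] [DecidableEq ι]
  [NormedAddCommGroup V] [NormedSpace ℝ V] [MetricSpace P] [NormedAddTorsor V P]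

theorem abs_mul_infDist_affineSpan_le_norm_weightedVSub (x : ι → P) {δ : ι → ℝ}
    (hδ : ∑ i, δ i = 0) (i₀ : ι) :
    |δ i₀| * infDist (x i₀) (affineSpan ℝ (x '' {j | j ≠ i₀})) ≤
      ‖Finset.univ.weightedVSub x δ‖ := by
  rcases eq_or_ne (δ i₀) 0 with h | h
  · simp [h]
  set w : ι → ℝ := Pi.single i₀ 1 - (δ i₀)⁻¹ • δ
  have hw : ∑ i, w i = 1 := by
    simp [w, Finset.sum_sub_distrib, ← Finset.mul_sum, hδ]
  set z := Finset.univ.affineCombination ℝ x w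
  have hz : z ∈ affineSpan ℝ (x '' {j | j ≠ i₀}) :=
    affineCombination_mem_affineSpan_image hw (fun i _ hi => by simp_all [w]) x
  have hvsub : x i₀ -ᵥ z = (δ i₀)⁻¹ • Finset.univ.weightedVSub x δ := by
    rw [← Finset.univ.affineCombination_piSingle ℝ x (Finset.mem_univ i₀),
      Finset.affineCombination_vsub, ← map_smul]
    simp [w]
  calc |δ i₀| * infDist (x i₀) (affineSpan ℝ (x '' {j | j ≠ i₀}))
      ≤ |δ i₀| * dist (x i₀) z := by gcongr; exact infDist_le_dist_of_mem hz
    _ = ‖Finset.univ.weightedVSub x δ‖ := by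
      rw [dist_eq_norm_vsub V, hvsub, norm_smul, norm_inv, Real.norm_eq_abs,
        mul_inv_cancel_left₀ (abs_ne_zero.2 h)]

end

theorem stmt3_general (p : ℕ)
    (x : Fin (p + 1) → Euc p)
    (γ γ' : Fin (p + 1) → ℝ)
    (hγ1 : ∑ i, γ i = 1)
    (hγ'1 : ∑ i, γ' i = 1) :
    |γ 0 - γ' 0| *
        Metric.infDist (x 0) (affineSpan ℝ (x '' {j | j ≠ 0}) : Set (Euc p)) ≤
      dist (∑ i, γ i • x i) (∑ i, γ' i • x i) := by
  have hδ : ∑ i, (γ - γ') i = 0 := by simp [Finset.sum_sub_distrib, hγ1, hγ'1]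
  have hdiff : (∑ i, γ i • x i) - ∑ i, γ' i • x i = Finset.univ.weightedVSub x (γ - γ') := by
    simp [Finset.weightedVSub_eq_linear_combination _ hδ, sub_smul, Finset.sum_sub_distrib]
  rw [dist_eq_norm, hdiff]
  exact abs_mul_infDist_affineSpan_le_norm_weightedVSub x hδ 0

theorem stmt3 (p : ℕ)
    (x : Fin (p + 1) → Euc p) (hx : AffineIndependent ℝ x)
    (γ γ' : Fin (p + 1) → ℝ)
    (hγ : ∀ i, 0 ≤ γ i) (hγ1 : ∑ i, γ i = 1)
    (hγ' : ∀ i, 0 ≤ γ' i) (hγ'1 : ∑ i, γ' i = 1) :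
    |γ 0 - γ' 0| *
        Metric.infDist (x 0) (affineSpan ℝ (x '' {j | j ≠ 0}) : Set (Euc p)) ≤
      dist (∑ i, γ i • x i) (∑ i, γ' i • x i) :=
  stmt3_general p x γ γ' hγ1 hγ'1
end
end

section
/- For any bounded measurable set F ⊆ ℝ^p and any (p-1)-dimensional hyperplane L with unit normal vector v, for Lebesgue-almost every t ∈ ℝ the upper box dimension of the slice (L + tv) ∩ F is at most max{0, (upper box dimension of F) − 1}. -/
/-!
A grid cube of side `2⁻ᴺ` meets the slice `⟪x, v⟫ = c + t` only for `t` in an interval of length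
`2 √p 2⁻ᴺ ‖v‖`, so the slice counts `a_N(t)` integrate to at most `a_N(F) · 2 √p 2⁻ᴺ ‖v‖`, and
`a_N(F) ≤ 2^{N (dim F + ε/2)}` for large `N`. With `s = max 0 (dim F - 1) + ε`, Markov's inequality
bounds the measure of `{t | 2^{N s} ≤ a_N(t)}` by a multiple of `2^{-N ε/2}`. By Borel–Cantelli,
almost every `t` lies in only finitely many of these sets, so the slice has dimension `≤ s`;
finally let `ε = 1/(j+1) → 0`.
-/

open Set Metric MeasureTheory Filter

noncomputable section

/-- The closed dyadic grid cube of side `2^{-N}` indexed by `k`. -/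
def gridCube (p : ℕ) (N : ℕ) (k : Fin p → ℤ) : Set (Euc p) :=
  {x | ∀ i, (k i : ℝ) * (2 : ℝ) ^ (-(N : ℤ)) ≤ x i ∧
        x i ≤ ((k i : ℝ) + 1) * (2 : ℝ) ^ (-(N : ℤ))}

/-- The number of closed `2^{-N}` grid cubes intersected by `F`. -/
def cubeCount (p : ℕ) (F : Set (Euc p)) (N : ℕ) : ℕ :=
  Set.ncard {k : Fin p → ℤ | (gridCube p N k ∩ F).Nonempty}

/-- The upper box (Minkowski) dimension, via dyadic cube counting. -/
def upperBoxDim (p : ℕ) (F : Set (Euc p)) : ℝ :=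
  Filter.limsup (fun N : ℕ => Real.logb 2 (cubeCount p F N) / N) Filter.atTop

open scoped RealInnerProductSpace ENNReal Topology

lemma logb_two_div_le_iff {n N : ℕ} (hn : 0 < n) (hN : 0 < N) {s : ℝ} :
    Real.logb 2 n / N ≤ s ↔ (n : ℝ) ≤ (2 ^ s) ^ N := by
  rw [div_le_iff₀ (by positivity), Real.logb_le_iff_le_rpow one_lt_two (by positivity),
    Real.rpow_mul_natCast zero_le_two]

lemma logb_two_natCast_div_nonneg (n N : ℕ) : 0 ≤ Real.logb 2 n / N :=
  div_nonneg (div_nonneg (Real.log_natCast_nonneg n) (Real.log_nonneg one_le_two)) N.cast_nonneg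

lemma eventually_logb_two_div_le {u : ℕ → ℕ} {s : ℝ} (hs : 0 ≤ s)
    (h : ∀ᶠ N in atTop, (u N : ℝ) ≤ (2 ^ s) ^ N) :
    ∀ᶠ N in atTop, Real.logb 2 (u N) / N ≤ s := by
  filter_upwards [h, eventually_gt_atTop 0] with N huN hN
  rcases (u N).eq_zero_or_pos with hu | hu
  · simpa [hu] using hs
  · exact (logb_two_div_le_iff hu hN).2 huN

lemma EuclideanSpace.norm_le_sqrt_card_mul {ι : Type*} [Fintype ι] {x : EuclideanSpace ℝ ι}
    {r : ℝ} (hr : 0 ≤ r) (h : ∀ i, |x i| ≤ r) : ‖x‖ ≤ √(Fintype.card ι) * r :=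
  calc ‖x‖ = √(∑ i, ‖x i‖ ^ 2) := EuclideanSpace.norm_eq x
    _ ≤ √(∑ _i : ι, r ^ 2) := by gcongr with i; exact h i
    _ = √(Fintype.card ι) * r := by
      rw [Finset.sum_const, Finset.card_univ, nsmul_eq_mul, Real.sqrt_mul (Nat.cast_nonneg _),
        Real.sqrt_sq hr]

section

variable {p : ℕ}

lemma upperBoxDim_le_of_eventually_cubeCount_le {F : Set (Euc p)} {s : ℝ} (hs : 0 ≤ s)
    (h : ∀ᶠ N in atTop, (cubeCount p F N : ℝ) ≤ (2 ^ s) ^ N) : upperBoxDim p F ≤ s :=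
  limsup_le_of_le (isCoboundedUnder_le_of_le atTop fun N => logb_two_natCast_div_nonneg _ N)
    (eventually_logb_two_div_le hs h)

-- Without an a priori growth bound the `limsup` defining `upperBoxDim` is a junk value.
lemma eventually_cubeCount_le_of_upperBoxDim_lt {F : Set (Euc p)} {s : ℝ}
    (hbdd : ∃ s₀ : ℝ, 0 ≤ s₀ ∧ ∀ᶠ N in atTop, (cubeCount p F N : ℝ) ≤ (2 ^ s₀) ^ N)
    (h : upperBoxDim p F < s) :
    ∀ᶠ N in atTop, (cubeCount p F N : ℝ) ≤ (2 ^ s) ^ N := by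
  obtain ⟨s₀, hs₀, h₀⟩ := hbdd
  filter_upwards [eventually_lt_of_limsup_lt h ⟨s₀, eventually_logb_two_div_le hs₀ h₀⟩,
    eventually_gt_atTop 0] with N hlt hN
  rcases (cubeCount p F N).eq_zero_or_pos with hc | hc
  · rw [hc, Nat.cast_zero]; positivity
  · exact (logb_two_div_le_iff hc hN).1 hlt.le

lemma gridCube_eq (N : ℕ) (k : Fin p → ℤ) :
    gridCube p N k = {x | ∀ i, (k i : ℝ) / 2 ^ N ≤ x i ∧ x i ≤ ((k i : ℝ) + 1) / 2 ^ N} := by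
  simp [gridCube, div_eq_mul_inv]

lemma index_mem_Icc_of_mem_gridCube {N : ℕ} {k : Fin p → ℤ} {x : Euc p} {R : ℝ}
    (hx : x ∈ gridCube p N k) (hxR : ‖x‖ ≤ R) :
    k ∈ Set.Icc (fun _ => -((⌈R⌉₊ * 2 ^ N : ℕ) : ℤ) - 1) (fun _ => ((⌈R⌉₊ * 2 ^ N : ℕ) : ℤ)) := by
  rw [gridCube_eq] at hx
  have hxi (i : Fin p) : |x i| ≤ ⌈R⌉₊ :=
    (PiLp.norm_apply_le x i).trans (hxR.trans (Nat.le_ceil R))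
  have h2N : (0 : ℝ) < 2 ^ N := by positivity
  refine ⟨fun i => ?_, fun i => ?_⟩
  · have hhi := (le_div_iff₀ h2N).1 ((neg_le_of_abs_le (hxi i)).trans (hx i).2)
    have : -((⌈R⌉₊ : ℝ) * 2 ^ N) - 1 ≤ k i := by nlinarith
    exact_mod_cast this
  · have hlo := (div_le_iff₀ h2N).1 ((hx i).1.trans (le_of_abs_le (hxi i)))
    have : (k i : ℝ) ≤ ⌈R⌉₊ * 2 ^ N := by nlinarith
    exact_mod_cast this

lemma setOf_gridCube_inter_nonempty_subset_Icc {F : Set (Euc p)} {R : ℝ}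
    (hFR : F ⊆ closedBall 0 R) (N : ℕ) :
    {k | (gridCube p N k ∩ F).Nonempty} ⊆
      Set.Icc (fun _ => -((⌈R⌉₊ * 2 ^ N : ℕ) : ℤ) - 1) (fun _ => ((⌈R⌉₊ * 2 ^ N : ℕ) : ℤ)) :=
  fun _ ⟨_, hxk, hxF⟩ => index_mem_Icc_of_mem_gridCube hxk (mem_closedBall_zero_iff.1 (hFR hxF))

lemma finite_setOf_gridCube_inter_nonempty {F : Set (Euc p)} (hF : Bornology.IsBounded F)
    (N : ℕ) : {k | (gridCube p N k ∩ F).Nonempty}.Finite := by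
  obtain ⟨R, hFR⟩ := hF.subset_closedBall 0
  exact (Set.finite_Icc _ _).subset (setOf_gridCube_inter_nonempty_subset_Icc hFR N)

lemma cubeCount_le_of_subset_closedBall {F : Set (Euc p)} {R : ℝ}
    (hFR : F ⊆ closedBall 0 R) (N : ℕ) :
    (cubeCount p F N : ℝ) ≤ ((2 * ⌈R⌉₊ + 2) * 2 ^ N) ^ p := by
  have hcount : cubeCount p F N ≤ (2 * (⌈R⌉₊ * 2 ^ N) + 2) ^ p := by
    refine (Set.ncard_le_ncard (setOf_gridCube_inter_nonempty_subset_Icc hFR N)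
      (Set.finite_Icc _ _)).trans_eq ?_
    rw [← Finset.coe_Icc, Set.ncard_coe_finset, Pi.card_Icc, Finset.prod_const, Int.card_Icc,
      Finset.card_univ, Fintype.card_fin]
    congr 1
    omega
  calc (cubeCount p F N : ℝ) ≤ ((2 * (⌈R⌉₊ * 2 ^ N) + 2 : ℕ) : ℝ) ^ p := by exact_mod_cast hcount
    _ ≤ ((2 * ⌈R⌉₊ + 2) * 2 ^ N) ^ p := by
      push_cast
      gcongr
      nlinarith [one_le_pow₀ (one_le_two (α := ℝ)) (n := N)]

lemma eventually_cubeCount_le_of_isBounded {F : Set (Euc p)} (hF : Bornology.IsBounded F) :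
    ∀ᶠ N in atTop, (cubeCount p F N : ℝ) ≤ (2 ^ (2 * p : ℝ)) ^ N := by
  obtain ⟨R, hFR⟩ := hF.subset_closedBall 0
  have hpow : Tendsto (fun N : ℕ => (2 : ℝ) ^ N) atTop atTop :=
    tendsto_pow_atTop_atTop_of_one_lt one_lt_two
  filter_upwards [hpow.eventually_ge_atTop (2 * ⌈R⌉₊ + 2)] with N hN
  calc (cubeCount p F N : ℝ) ≤ ((2 * ⌈R⌉₊ + 2) * 2 ^ N) ^ p :=
        cubeCount_le_of_subset_closedBall hFR N
    _ ≤ (2 ^ N * 2 ^ N) ^ p := by gcongr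
    _ = (2 ^ (2 * p : ℝ)) ^ N := by
      rw [show (2 * p : ℝ) = ((2 * p : ℕ) : ℝ) by push_cast; ring, Real.rpow_natCast]
      ring

def gridCorner (N : ℕ) (k : Fin p → ℤ) : Euc p := WithLp.toLp 2 fun i => (k i : ℝ) / 2 ^ N

lemma norm_sub_gridCorner_le {N : ℕ} {k : Fin p → ℤ} {x : Euc p} (hx : x ∈ gridCube p N k) :
    ‖x - gridCorner N k‖ ≤ √p / 2 ^ N := by
  have := EuclideanSpace.norm_le_sqrt_card_mul (x := x - gridCorner N k)
    (r := 1 / 2 ^ N) (by positivity) fun i => ?_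
  · rwa [Fintype.card_fin, ← div_eq_mul_one_div] at this
  rw [gridCube_eq] at hx
  obtain ⟨hlo, hhi⟩ := hx i
  simp only [gridCorner, PiLp.sub_apply]
  rw [add_div] at hhi
  rw [abs_le]
  constructor <;> linarith [show (0 : ℝ) < 1 / 2 ^ N by positivity]

def gridShadow (v : Euc p) (c : ℝ) (N : ℕ) (k : Fin p → ℤ) : Set ℝ :=
  closedBall (⟪gridCorner N k, v⟫ - c) (√p / 2 ^ N * ‖v‖)

lemma measurableSet_gridShadow (v : Euc p) (c : ℝ) (N : ℕ) (k : Fin p → ℤ) :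
    MeasurableSet (gridShadow v c N k) :=
  measurableSet_closedBall

lemma volume_gridShadow (v : Euc p) (c : ℝ) (N : ℕ) (k : Fin p → ℤ) :
    volume (gridShadow v c N k) = ENNReal.ofReal (2 * (√p / 2 ^ N * ‖v‖)) :=
  Real.volume_closedBall _ _

lemma mem_gridShadow_of_mem_gridCube {N : ℕ} {k : Fin p → ℤ} {x v : Euc p} {c t : ℝ}
    (hx : x ∈ gridCube p N k) (hxt : ⟪x, v⟫ = c + t) : t ∈ gridShadow v c N k := by
  rw [gridShadow, mem_closedBall, Real.dist_eq]
  calc |t - (⟪gridCorner N k, v⟫ - c)| = |⟪x - gridCorner N k, v⟫| := by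
        rw [inner_sub_left, hxt]; ring_nf
    _ ≤ ‖x - gridCorner N k‖ * ‖v‖ := abs_real_inner_le_norm _ _
    _ ≤ √p / 2 ^ N * ‖v‖ := by gcongr; exact norm_sub_gridCorner_le hx

lemma cubeCount_slice_le_sum_indicator {F : Set (Euc p)} {N : ℕ}
    (hS : {k | (gridCube p N k ∩ F).Nonempty}.Finite) (v : Euc p) (c t : ℝ) :
    (cubeCount p ({x | ⟪x, v⟫ = c + t} ∩ F) N : ℝ≥0∞) ≤
      ∑ k ∈ hS.toFinset, (gridShadow v c N k).indicator 1 t := by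
  classical
  have hsub : {k | (gridCube p N k ∩ ({x | ⟪x, v⟫ = c + t} ∩ F)).Nonempty} ⊆
      hS.toFinset.filter fun k => t ∈ gridShadow v c N k := by
    rintro k ⟨x, hxk, hxt, hxF⟩
    simp only [Finset.coe_filter, Set.Finite.mem_toFinset, Set.mem_ofPred_eq]
    exact ⟨⟨x, hxk, hxF⟩, mem_gridShadow_of_mem_gridCube hxk hxt⟩
  have hcard := Set.ncard_le_ncard hsub (Finset.finite_toSet _)
  rw [Set.ncard_coe_finset, Finset.card_filter] at hcard
  rw [cubeCount]
  refine (Nat.cast_le.2 hcard).trans_eq ?_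
  push_cast
  simp [Set.indicator_apply]

lemma volume_setOf_le_cubeCount_slice_le {F : Set (Euc p)} (hF : Bornology.IsBounded F)
    (v : Euc p) (c : ℝ) (N : ℕ) {a : ℝ} (ha : 0 < a) :
    volume {t : ℝ | a ≤ cubeCount p ({x | ⟪x, v⟫ = c + t} ∩ F) N} ≤
      ENNReal.ofReal (cubeCount p F N * (2 * (√p / 2 ^ N * ‖v‖)) / a) := by
  have hS := finite_setOf_gridCube_inter_nonempty hF N
  have hind (k : Fin p → ℤ) : Measurable ((gridShadow v c N k).indicator (1 : ℝ → ℝ≥0∞)) :=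
    measurable_one.indicator (measurableSet_gridShadow v c N k)
  have hint : ∫⁻ t, ∑ k ∈ hS.toFinset, (gridShadow v c N k).indicator 1 t =
      cubeCount p F N * ENNReal.ofReal (2 * (√p / 2 ^ N * ‖v‖)) := by
    rw [lintegral_finsetSum _ fun k _ => hind k]
    simp only [lintegral_indicator_one (measurableSet_gridShadow v c N _), volume_gridShadow,
      Finset.sum_const, nsmul_eq_mul, cubeCount, Set.ncard_eq_toFinset_card _ hS]
  calc volume {t : ℝ | a ≤ cubeCount p ({x | ⟪x, v⟫ = c + t} ∩ F) N}
      ≤ volume {t | ENNReal.ofReal a ≤ ∑ k ∈ hS.toFinset, (gridShadow v c N k).indicator 1 t} := by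
        refine measure_mono fun t ht => le_trans ?_ (cubeCount_slice_le_sum_indicator hS v c t)
        rw [← ENNReal.ofReal_natCast]
        exact ENNReal.ofReal_le_ofReal ht
    _ ≤ (∫⁻ t, ∑ k ∈ hS.toFinset, (gridShadow v c N k).indicator 1 t) / ENNReal.ofReal a :=
        meas_ge_le_lintegral_div (Finset.measurable_sum _ fun k _ => hind k).aemeasurable
          (by simpa using ha) ENNReal.ofReal_ne_top
    _ = ENNReal.ofReal (cubeCount p F N * (2 * (√p / 2 ^ N * ‖v‖)) / a) := by
        rw [hint, ← ENNReal.ofReal_natCast, ← ENNReal.ofReal_mul (Nat.cast_nonneg _),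
          ← ENNReal.ofReal_div_of_pos ha]

lemma ae_upperBoxDim_slice_le_add {F : Set (Euc p)} (hF : Bornology.IsBounded F)
    (v : Euc p) (c : ℝ) {ε : ℝ} (hε : 0 < ε) :
    ∀ᵐ t : ℝ, upperBoxDim p ({x | ⟪x, v⟫ = c + t} ∩ F) ≤ max 0 (upperBoxDim p F - 1) + ε := by
  set s := max 0 (upperBoxDim p F - 1) + ε
  set b := (2 : ℝ) ^ (upperBoxDim p F + ε / 2)
  have hs : 0 ≤ s := by positivity
  have hcount : ∀ᶠ N in atTop, (cubeCount p F N : ℝ) ≤ b ^ N :=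
    eventually_cubeCount_le_of_upperBoxDim_lt
      ⟨2 * p, by positivity, eventually_cubeCount_le_of_isBounded hF⟩ (by linarith)
  -- `upperBoxDim p F + ε / 2 < 1 + s`: the Markov bounds decay geometrically
  have hratio : b / (2 * 2 ^ s) < 1 := by
    rw [div_lt_one (by positivity), ← Real.rpow_one_add' zero_le_two (by positivity)]
    exact Real.rpow_lt_rpow_of_exponent_lt one_lt_two
      (by linarith [le_max_right 0 (upperBoxDim p F - 1)])
  have hsum : Summable fun N : ℕ => cubeCount p F N * (2 * (√p / 2 ^ N * ‖v‖)) / (2 ^ s) ^ N := by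
    refine ((summable_geometric_of_lt_one (by positivity) hratio).mul_left
      (2 * √p * ‖v‖)).of_norm_bounded_eventually_nat ?_
    filter_upwards [hcount] with N hN
    rw [Real.norm_of_nonneg (by positivity), div_pow, mul_pow]
    calc (cubeCount p F N : ℝ) * (2 * (√p / 2 ^ N * ‖v‖)) / (2 ^ s) ^ N
        = 2 * √p * ‖v‖ * (cubeCount p F N / (2 ^ N * (2 ^ s) ^ N)) := by field_simp
      _ ≤ 2 * √p * ‖v‖ * (b ^ N / (2 ^ N * (2 ^ s) ^ N)) := by gcongr
  have hvol : ∑' N, volume {t : ℝ | ((2 : ℝ) ^ s) ^ N ≤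
      cubeCount p ({x | ⟪x, v⟫ = c + t} ∩ F) N} ≠ ∞ :=
    ne_top_of_le_ne_top ENNReal.ofReal_ne_top <|
      (ENNReal.tsum_le_tsum fun N => volume_setOf_le_cubeCount_slice_le hF v c N (by positivity)).trans_eq
        (ENNReal.ofReal_tsum_of_nonneg (fun N => by positivity) hsum).symm
  filter_upwards [ae_eventually_notMem hvol] with t ht
  exact upperBoxDim_le_of_eventually_cubeCount_le hs (ht.mono fun N hN => (not_le.1 hN).le)

end

theorem stmt4_general (p : ℕ) (F : Set (Euc p))
    (hF : Bornology.IsBounded F)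
    (v : Euc p) (c : ℝ) :
    ∀ᵐ t : ℝ, upperBoxDim p ({x : Euc p | (inner ℝ x v : ℝ) = c + t} ∩ F) ≤
      max 0 (upperBoxDim p F - 1) := by
  have hae : ∀ᵐ t : ℝ, ∀ j : ℕ, upperBoxDim p ({x | ⟪x, v⟫ = c + t} ∩ F) ≤
      max 0 (upperBoxDim p F - 1) + 1 / (j + 1) :=
    ae_all_iff.2 fun j => ae_upperBoxDim_slice_le_add hF v c Nat.one_div_pos_of_nat
  filter_upwards [hae] with t ht
  have hlim : Tendsto (fun j : ℕ => max 0 (upperBoxDim p F - 1) + 1 / ((j : ℝ) + 1)) atTop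
      (𝓝 (max 0 (upperBoxDim p F - 1))) := by
    simpa using tendsto_one_div_add_atTop_nhds_zero_nat.const_add (max 0 (upperBoxDim p F - 1))
  exact ge_of_tendsto' hlim ht

theorem stmt4 (p : ℕ) (F : Set (Euc p))
    (hF : Bornology.IsBounded F) (hFm : MeasurableSet F)
    (v : Euc p) (hv : ‖v‖ = 1) (c : ℝ) :
    ∀ᵐ t : ℝ, upperBoxDim p ({x : Euc p | (inner ℝ x v : ℝ) = c + t} ∩ F) ≤
      max 0 (upperBoxDim p F - 1) :=
  stmt4_general p F hF v c
end
end

section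
/- Let F ⊆ ℝ^p be bounded and measurable, fix ε > 0 and s ≥ 1, and suppose a_N(F) ≤ 2^{(s+ε)N} for all N > N₀, where a_N denotes the number of 2^{-N} grid cubes met by the set. Let L be the coordinate hyperplane orthogonal to the last basis vector e_p, let v = e_p, and let E_N be the set of t ∈ ℝ such that a_N((L+tv) ∩ F) > 2^{(s-1+2ε)N}. Then the Lebesgue measure of E_N is at most 2^{-εN} for all N > N₀. -/
open Set Metric MeasureTheory Filter

noncomputable section

/-- coordinates are bounded by the Euclidean norm -/
lemma abs_coord_le_norm {q : ℕ} (x : Euc q) (i : Fin q) : |x i| ≤ ‖x‖ := by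
  rw [EuclideanSpace.norm_eq]
  have h1 : |x i| = Real.sqrt (‖x i‖ ^ 2) := by
    rw [Real.sqrt_sq_eq_abs, Real.norm_eq_abs, abs_abs]
  rw [h1]
  exact Real.sqrt_le_sqrt (Finset.single_le_sum
    (fun j _ => sq_nonneg ‖x j‖) (Finset.mem_univ i))

/-- the set of cube indices meeting a bounded set is finite -/
lemma gridCubes_finite {q N : ℕ} {F : Set (Euc q)} (hF : Bornology.IsBounded F) :
    {k : Fin q → ℤ | (gridCube q N k ∩ F).Nonempty}.Finite := by
  obtain ⟨R, hR⟩ := hF.exists_norm_le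
  have h2N : (0 : ℝ) < (2 : ℝ) ^ (N : ℕ) := by positivity
  have hc : (2 : ℝ) ^ (-(N : ℤ)) = ((2 : ℝ) ^ (N : ℕ))⁻¹ := by
    rw [zpow_neg, zpow_natCast]
  apply Set.Finite.subset (Set.Finite.pi (fun _ : Fin q =>
    Set.finite_Icc (⌈-R * 2 ^ (N : ℕ) - 1⌉) (⌊R * 2 ^ (N : ℕ)⌋)))
  rintro k ⟨x, hxc, hxF⟩ i _
  have hRx := hR x hxF
  have habs := abs_coord_le_norm x i
  have hxi : |x i| ≤ R := le_trans habs hRx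
  obtain ⟨h1, h2⟩ := hxc i
  rw [hc] at h1 h2
  constructor
  · rw [Int.ceil_le]
    have hh : x i * 2 ^ (N : ℕ) ≤ (k i : ℝ) + 1 := by
      have := mul_le_mul_of_nonneg_right h2 (le_of_lt h2N)
      rwa [mul_assoc, inv_mul_cancel₀ (ne_of_gt h2N), mul_one] at this
    have hx : -R ≤ x i := neg_le_of_abs_le hxi
    nlinarith [mul_le_mul_of_nonneg_right hx (le_of_lt h2N)]
  · rw [Int.le_floor]
    have hh : (k i : ℝ) ≤ x i * 2 ^ (N : ℕ) := by
      have := mul_le_mul_of_nonneg_right h1 (le_of_lt h2N)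
      rwa [mul_assoc, inv_mul_cancel₀ (ne_of_gt h2N), mul_one] at this
    have hx : x i ≤ R := le_of_abs_le hxi
    nlinarith [mul_le_mul_of_nonneg_right hx (le_of_lt h2N)]

set_option maxHeartbeats 1000000 in
theorem stmt5 (p : ℕ) (F : Set (Euc (p + 1)))
    (hF : Bornology.IsBounded F) (hFm : MeasurableSet F)
    (s ε : ℝ) (hs : 1 ≤ s) (hε : 0 < ε) (N₀ N : ℕ) (hN : N₀ < N)
    (haF : ∀ m : ℕ, N₀ < m → (cubeCount (p + 1) F m : ℝ) ≤ (2 : ℝ) ^ ((s + ε) * m)) :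
    volume {t : ℝ | (2 : ℝ) ^ ((s - 1 + 2 * ε) * N) <
        (cubeCount (p + 1) ({x : Euc (p + 1) | x (Fin.last p) = t} ∩ F) N : ℝ)} ≤
      ENNReal.ofReal ((2 : ℝ) ^ (-(ε * N))) := by
  classical
  have h2N : (0 : ℝ) < (2 : ℝ) ^ (N : ℕ) := by positivity
  set c : ℝ := (2 : ℝ) ^ (-(N : ℤ)) with hcdef
  have hcinv : c = ((2 : ℝ) ^ (N : ℕ))⁻¹ := by rw [hcdef, zpow_neg, zpow_natCast]
  have hc0 : 0 < c := by rw [hcinv]; positivity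
  have hcmul : c * (2 : ℝ) ^ (N : ℕ) = 1 := by
    rw [hcinv]; exact inv_mul_cancel₀ (ne_of_gt h2N)
  set M : ℝ := (2 : ℝ) ^ ((s - 1 + 2 * ε) * N) with hMdef
  have hM0 : 0 < M := Real.rpow_pos_of_pos (by norm_num) _
  set S : Set (Fin (p + 1) → ℤ) := {k | (gridCube (p + 1) N k ∩ F).Nonempty} with hSdef
  have hSfin : S.Finite := gridCubes_finite hF
  set S' : Finset (Fin (p + 1) → ℤ) := hSfin.toFinset with hS'def
  set f : (Fin (p + 1) → ℤ) → ℤ := fun k => k (Fin.last p) with hfdef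
  set n : ℤ → ℕ := fun j => (S'.filter (fun k => f k = j)).card with hndef
  set J : Finset ℤ := (S'.image f).filter (fun j => M < (n j : ℝ)) with hJdef
  set E : Set ℝ := {t : ℝ | M <
      (cubeCount (p + 1) ({x : Euc (p + 1) | x (Fin.last p) = t} ∩ F) N : ℝ)} with hEdef
  set D : Set ℝ := Set.range (fun m : ℤ => (m : ℝ) * c) with hDdef
  have hDzero : volume D = 0 := (Set.countable_range _).measure_zero _
  -- cover claim
  have hcover : E ⊆ D ∪ ⋃ j ∈ J, Set.Ioo ((j : ℝ) * c) (((j : ℝ) + 1) * c) := by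
    intro t ht
    by_cases htD : t ∈ D
    · exact Or.inl htD
    right
    have hnotint : ∀ m : ℤ, t * (2 : ℝ) ^ (N : ℕ) ≠ (m : ℝ) := by
      intro m hm
      apply htD
      refine ⟨m, ?_⟩
      have : t * ((2 : ℝ) ^ (N : ℕ) * c) = (m : ℝ) * c := by
        rw [← mul_assoc, hm]
      rw [mul_comm ((2 : ℝ) ^ (N : ℕ)) c, hcmul, mul_one] at this
      simpa using this.symm
    set j : ℤ := ⌊t * (2 : ℝ) ^ (N : ℕ)⌋ with hjdef
    set T : Set (Fin (p + 1) → ℤ) :=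
      {k | (gridCube (p + 1) N k ∩ ({x : Euc (p + 1) | x (Fin.last p) = t} ∩ F)).Nonempty}
      with hTdef
    have hsub : T ⊆ ↑(S'.filter (fun k => f k = j)) := by
      rintro k ⟨x, hxc, hxs, hxF⟩
      have hkS : k ∈ S' := by
        rw [hS'def, Set.Finite.mem_toFinset]; exact ⟨x, hxc, hxF⟩
      obtain ⟨h1, h2⟩ := hxc (Fin.last p)
      rw [Set.mem_setOf_eq] at hxs
      rw [hxs] at h1 h2
      rw [← hcdef] at h1 h2
      have hl : (f k : ℝ) ≤ t * (2 : ℝ) ^ (N : ℕ) := by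
        have h := mul_le_mul_of_nonneg_right h1 (le_of_lt h2N)
        rw [mul_assoc, hcmul, mul_one] at h
        exact h
      have hr : t * (2 : ℝ) ^ (N : ℕ) ≤ (f k : ℝ) + 1 := by
        have h := mul_le_mul_of_nonneg_right h2 (le_of_lt h2N)
        rw [mul_assoc, hcmul, mul_one] at h
        exact h
      have hl' : (f k : ℝ) < t * (2 : ℝ) ^ (N : ℕ) :=
        lt_of_le_of_ne hl (fun h => hnotint (f k) h.symm)
      have hr' : t * (2 : ℝ) ^ (N : ℕ) < (f k : ℝ) + 1 := by
        refine lt_of_le_of_ne hr (fun h => hnotint (f k + 1) ?_)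
        push_cast; linarith
      have hfloor : j = f k := by
        rw [hjdef]
        exact Int.floor_eq_iff.mpr ⟨le_of_lt hl', hr'⟩
      rw [Finset.coe_filter, Set.mem_setOf_eq]
      exact ⟨hkS, hfloor.symm⟩
    have hTcard : (T.ncard : ℝ) ≤ (n j : ℝ) := by
      have h := Set.ncard_le_ncard hsub (Finset.finite_toSet _)
      rw [Set.ncard_coe_finset] at h
      exact_mod_cast h
    have htE : M < (T.ncard : ℝ) := ht
    have hnj : M < (n j : ℝ) := lt_of_lt_of_le htE hTcard
    have hjJ : j ∈ J := by
      rw [hJdef, Finset.mem_filter]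
      refine ⟨?_, hnj⟩
      have hpos : 0 < n j := by
        have : (0 : ℝ) < (n j : ℝ) := lt_trans hM0 hnj
        exact_mod_cast this
      obtain ⟨k, hk⟩ := Finset.card_pos.mp hpos
      rw [Finset.mem_filter] at hk
      exact Finset.mem_image.mpr ⟨k, hk.1, hk.2⟩
    refine Set.mem_biUnion hjJ ?_
    constructor
    · have hjq : (j : ℝ) < t * (2 : ℝ) ^ (N : ℕ) :=
        lt_of_le_of_ne (Int.floor_le _) (fun h => hnotint j h.symm)
      have h := mul_lt_mul_of_pos_right hjq hc0
      rwa [mul_assoc, mul_comm ((2 : ℝ) ^ (N : ℕ)) c, hcmul, mul_one] at h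
    · have hjq : t * (2 : ℝ) ^ (N : ℕ) < (j : ℝ) + 1 := Int.lt_floor_add_one _
      have h := mul_lt_mul_of_pos_right hjq hc0
      rwa [mul_assoc, mul_comm ((2 : ℝ) ^ (N : ℕ)) c, hcmul, mul_one] at h
  -- counting bound
  have hcount : (J.card : ℝ) * M ≤ (S'.card : ℝ) := by
    have h1 : S'.card = ∑ j ∈ S'.image f, n j :=
      Finset.card_eq_sum_card_fiberwise (fun x hx => Finset.mem_image_of_mem f hx)
    have h2 : ∑ j ∈ J, (n j : ℝ) ≤ ∑ j ∈ S'.image f, (n j : ℝ) := by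
      apply Finset.sum_le_sum_of_subset_of_nonneg (Finset.filter_subset _ _)
      intro i _ _; positivity
    have h3 : J.card • M ≤ ∑ j ∈ J, (n j : ℝ) :=
      Finset.card_nsmul_le_sum J _ M
        (fun j hj => le_of_lt (Finset.mem_filter.mp hj).2)
    rw [nsmul_eq_mul] at h3
    calc (J.card : ℝ) * M ≤ ∑ j ∈ J, (n j : ℝ) := h3
      _ ≤ ∑ j ∈ S'.image f, (n j : ℝ) := h2
      _ = (S'.card : ℝ) := by rw [h1]; push_cast; ring
  have hS'count : (S'.card : ℝ) ≤ (2 : ℝ) ^ ((s + ε) * N) := by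
    have h := haF N hN
    have heq : cubeCount (p + 1) F N = S'.card := by
      rw [hS'def, cubeCount, Set.ncard_eq_toFinset_card _ hSfin]
    rwa [heq] at h
  have hJcard : (J.card : ℝ) ≤ (2 : ℝ) ^ ((s + ε) * N) / M := by
    rw [le_div_iff₀ hM0]
    exact le_trans hcount hS'count
  have hfinal : (J.card : ℝ) * c ≤ (2 : ℝ) ^ (-(ε * N)) := by
    have hcr : c = (2 : ℝ) ^ (-(N : ℝ)) := by
      rw [hcdef, ← Real.rpow_intCast 2 (-(N : ℤ))]
      norm_num
    calc (J.card : ℝ) * c ≤ ((2 : ℝ) ^ ((s + ε) * N) / M) * c :=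
          mul_le_mul_of_nonneg_right hJcard (le_of_lt hc0)
      _ = (2 : ℝ) ^ (-(ε * N)) := by
          rw [hMdef, hcr, div_eq_mul_inv, ← Real.rpow_neg (by norm_num : (0:ℝ) ≤ 2),
            ← Real.rpow_add (by norm_num : (0:ℝ) < 2),
            ← Real.rpow_add (by norm_num : (0:ℝ) < 2)]
          congr 1
          ring
  calc volume E ≤ volume (D ∪ ⋃ j ∈ J, Set.Ioo ((j : ℝ) * c) (((j : ℝ) + 1) * c)) :=
        measure_mono hcover
    _ ≤ volume D + volume (⋃ j ∈ J, Set.Ioo ((j : ℝ) * c) (((j : ℝ) + 1) * c)) :=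
        measure_union_le _ _
    _ = volume (⋃ j ∈ J, Set.Ioo ((j : ℝ) * c) (((j : ℝ) + 1) * c)) := by
        rw [hDzero, zero_add]
    _ ≤ ∑ j ∈ J, volume (Set.Ioo ((j : ℝ) * c) (((j : ℝ) + 1) * c)) :=
        measure_biUnion_finset_le J _
    _ = ∑ _j ∈ J, ENNReal.ofReal c := by
        refine Finset.sum_congr rfl (fun j _ => ?_)
        rw [Real.volume_Ioo]
        congr 1
        ring
    _ = J.card • ENNReal.ofReal c := Finset.sum_const _
    _ = ENNReal.ofReal ((J.card : ℝ) * c) := by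
        rw [nsmul_eq_mul, ← ENNReal.ofReal_natCast J.card,
          ← ENNReal.ofReal_mul (by positivity)]
    _ ≤ ENNReal.ofReal ((2 : ℝ) ^ (-(ε * N))) := ENNReal.ofReal_le_ofReal hfinal
end
end

section
/- Let F ⊂ ℝ^p be compact, 0 < α ≤ 1. Suppose E ⊂ ℝ^p is closed, 𝒰 ⊆ C₁^α(F) is open, and {f₁, f₂, …} is a countable dense subset of 𝒰. Then there exists a dense G_δ subset 𝒢 of 𝒰 such that sup_{f∈𝒢} D_*^f(F ∩ E) ≤ sup_{k∈ℕ} D_*^{f_k}(F ∩ E). -/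
open Set Metric MeasureTheory Filter

open scoped ENNReal NNReal

section AuxCover

variable {X : Type*} [MetricSpace X]

/-- A countable cover with diameters at most `ρ` and `q`-content at most `η`. -/
def CoverAt (q : ℝ) (η ρ : ℝ≥0∞) (s : Set X) : Prop :=
  ∃ t : ℕ → Set X, s ⊆ ⋃ n, t n ∧ (∀ n, EMetric.diam (t n) ≤ ρ) ∧
    ∑' n, EMetric.diam (t n) ^ q ≤ η

lemma CoverAt.mono {q : ℝ} {η ρ : ℝ≥0∞} {s s' : Set X} (hs : s' ⊆ s)
    (h : CoverAt q η ρ s) : CoverAt q η ρ s' := by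
  obtain ⟨t, h1, h2, h3⟩ := h
  exact ⟨t, hs.trans h1, h2, h3⟩

variable [MeasurableSpace X] [BorelSpace X]

lemma hausdorffMeasure_eq_zero_of_coverAt {q : ℝ} {s : Set X}
    (h : ∀ ε : ℝ≥0∞, 0 < ε → ∃ η ρ : ℝ≥0∞, η ≤ ε ∧ ρ ≤ ε ∧ CoverAt q η ρ s) :
    μH[q] s = 0 := by
  refine le_antisymm ?_ zero_le
  rw [MeasureTheory.Measure.hausdorffMeasure_apply]
  refine iSup₂_le fun r hr => ?_
  have : ∀ ε : ℝ≥0, 0 < ε →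
      (⨅ (t : ℕ → Set X) (_ : s ⊆ ⋃ n, t n) (_ : ∀ n, EMetric.diam (t n) ≤ r),
        ∑' n, ⨆ _ : (t n).Nonempty, EMetric.diam (t n) ^ q) ≤ (ε : ℝ≥0∞) := by
    intro ε hε
    obtain ⟨η, ρ, hηε, hρr, t, hcov, hdiam, hsum⟩ := h (min r ε)
      (lt_min hr (by exact_mod_cast hε))
    refine le_trans (iInf_le_of_le t (iInf_le_of_le hcov (iInf_le_of_le
      (fun n => (hdiam n).trans (hρr.trans (min_le_left _ _))) le_rfl))) ?_
    refine le_trans (ENNReal.tsum_le_tsum fun n => iSup_le fun _ => le_rfl) ?_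
    exact hsum.trans (hηε.trans (min_le_right _ _))
  refine ENNReal.le_of_forall_pos_le_add (fun ε hε _ => ?_)
  rw [zero_add]
  exact this ε hε

end AuxCover

section AuxCover2

variable {X : Type*} [MetricSpace X] [MeasurableSpace X] [BorelSpace X]

lemma dimH_le_of_forall_coverAt {q : ℝ} (hq0 : 0 < q) {s : Set X}
    (h : ∀ ε : ℝ≥0∞, 0 < ε → ∃ η ρ : ℝ≥0∞, η ≤ ε ∧ ρ ≤ ε ∧ CoverAt q η ρ s) :
    dimH s ≤ ENNReal.ofReal q := by
  have h0 : μH[q] s = 0 := hausdorffMeasure_eq_zero_of_coverAt h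
  have hq : ((q.toNNReal : ℝ≥0) : ℝ) = q := Real.coe_toNNReal q hq0.le
  have h1 : dimH s ≤ (q.toNNReal : ℝ≥0∞) := by
    refine dimH_le_of_hausdorffMeasure_ne_top ?_
    rw [hq, h0]
    exact ENNReal.zero_ne_top
  exact h1

lemma exists_isOpen_coverAt {q : ℝ} (hq0 : 0 < q) {s : Set X}
    (hs : dimH s < ENNReal.ofReal q) {η ρ : ℝ} (hη : 0 < η) (hρ : 0 < ρ) :
    ∃ W : Set X, IsOpen W ∧ s ⊆ W ∧
      CoverAt q (ENNReal.ofReal η) (ENNReal.ofReal ρ) W := by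
  classical
  have h0 : μH[q] s = 0 := by
    have : dimH s < ((q.toNNReal : ℝ≥0) : ℝ≥0∞) := by
      rwa [ENNReal.coe_nnreal_eq, Real.coe_toNNReal q hq0.le] at *
    have h2 := hausdorffMeasure_of_dimH_lt this
    rwa [Real.coe_toNNReal q hq0.le] at h2
  -- constants
  set P : ℝ≥0∞ := (2 : ℝ≥0∞) ^ q with hPdef
  have hP0 : P ≠ 0 := (ENNReal.rpow_pos (by norm_num) (by norm_num)).ne'
  have hPtop : P ≠ ⊤ := ENNReal.rpow_ne_top_of_nonneg hq0.le (by norm_num)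
  set rt : ℝ≥0∞ := (2⁻¹ : ℝ≥0∞) ^ q with hrtdef
  have hrt1 : rt < 1 := ENNReal.rpow_lt_one (by norm_num) hq0
  set G : ℝ≥0∞ := (1 - rt)⁻¹ with hGdef
  have hGtop : G ≠ ⊤ := ENNReal.inv_ne_top.mpr (tsub_pos_of_lt hrt1).ne'
  have hG0 : G ≠ 0 := ENNReal.inv_ne_zero.mpr (by
    exact ne_top_of_le_ne_top ENNReal.one_ne_top tsub_le_self)
  set Hf : ℝ≥0∞ := ENNReal.ofReal η / 2 with hHfdef
  have hHf0 : Hf ≠ 0 := by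
    simp only [hHfdef, ne_eq, ENNReal.div_eq_zero_iff]
    push_neg
    exact ⟨(ENNReal.ofReal_pos.mpr hη).ne', by norm_num⟩
  have hHftop : Hf ≠ ⊤ := by
    simp only [hHfdef]
    exact (ENNReal.div_lt_top ENNReal.ofReal_ne_top (by norm_num)).ne
  set ε₀ : ℝ≥0∞ := Hf / P with hε₀def
  have hε₀0 : 0 < ε₀ := ENNReal.div_pos hHf0 hPtop
  -- extract a cover of `s` at scale `ρ/2` with content `< ε₀`
  have happly := MeasureTheory.Measure.hausdorffMeasure_apply q s
  have hterm : (⨅ (t : ℕ → Set X) (_ : s ⊆ ⋃ n, t n)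
      (_ : ∀ n, EMetric.diam (t n) ≤ ENNReal.ofReal (ρ / 2)),
      ∑' n, ⨆ _ : (t n).Nonempty, EMetric.diam (t n) ^ q) < ε₀ := by
    have hle : (⨅ (t : ℕ → Set X) (_ : s ⊆ ⋃ n, t n)
        (_ : ∀ n, EMetric.diam (t n) ≤ ENNReal.ofReal (ρ / 2)),
        ∑' n, ⨆ _ : (t n).Nonempty, EMetric.diam (t n) ^ q) ≤ μH[q] s := by
      rw [happly]
      exact le_iSup₂ (f := fun (r : ℝ≥0∞) (_ : 0 < r) =>
        ⨅ (t : ℕ → Set X) (_ : s ⊆ ⋃ n, t n) (_ : ∀ n, EMetric.diam (t n) ≤ r),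
          ∑' n, ⨆ _ : (t n).Nonempty, EMetric.diam (t n) ^ q)
        (ENNReal.ofReal (ρ / 2)) (ENNReal.ofReal_pos.mpr (by linarith))
    calc _ ≤ μH[q] s := hle
    _ = 0 := h0
    _ < ε₀ := hε₀0
  simp only [iInf_lt_iff] at hterm
  obtain ⟨t, hcov, hdiam, hsum⟩ := hterm
  have hsum' : ∑' n, EMetric.diam (t n) ^ q < ε₀ := by
    have : ∀ n, EMetric.diam (t n) ^ q
        = ⨆ _ : (t n).Nonempty, EMetric.diam (t n) ^ q := by
      intro n
      rcases eq_empty_or_nonempty (t n) with hn | hn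
      · simp [hn, EMetric.diam_empty, ENNReal.zero_rpow_of_pos hq0]; exact Or.inl ⟨EMetric.diam_empty, hq0⟩
      · simp [hn]
    rw [tsum_congr this]
    exact hsum
  -- choose the thickening constant
  set β : ℝ≥0∞ := Hf / (P * G) with hβdef
  have hβ0 : β ≠ 0 := by
    simp only [hβdef, ne_eq, ENNReal.div_eq_zero_iff]
    push_neg
    exact ⟨hHf0, ENNReal.mul_ne_top hPtop hGtop⟩
  obtain ⟨b, hb0, hbβ⟩ : ∃ b : ℝ≥0, 0 < b ∧ (b : ℝ≥0∞) ≤ β := by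
    rcases eq_or_ne β ⊤ with hβt | hβt
    · exact ⟨1, one_pos, by simp [hβt]⟩
    · refine ⟨β.toNNReal, ?_, ?_⟩
      · simp only [ENNReal.toNNReal_pos_iff]
        exact ⟨pos_iff_ne_zero.mpr hβ0, lt_top_iff_ne_top.mpr hβt⟩
      · rw [ENNReal.coe_toNNReal hβt]
  set c : ℝ≥0 := min (b ^ (q⁻¹ : ℝ) / 2) ((ρ / 4).toNNReal) with hcdef
  have hc0 : 0 < c := by
    refine lt_min ?_ ?_
    · have : (0 : ℝ≥0) < b ^ (q⁻¹ : ℝ) := NNReal.rpow_pos hb0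
      positivity
    · exact Real.toNNReal_pos.mpr (by linarith)
  have hc_pow : ((2 * c : ℝ≥0) : ℝ≥0∞) ^ q ≤ β := by
    have h2c : (2 * c : ℝ≥0) ≤ b ^ (q⁻¹ : ℝ) := by
      calc (2 * c : ℝ≥0) ≤ 2 * (b ^ (q⁻¹ : ℝ) / 2) := by
            exact mul_le_mul_right (min_le_left _ _) 2
      _ = b ^ (q⁻¹ : ℝ) := by
            rw [mul_comm]
            exact div_mul_cancel₀ _ two_ne_zero
    calc ((2 * c : ℝ≥0) : ℝ≥0∞) ^ q ≤ ((b ^ (q⁻¹ : ℝ) : ℝ≥0) : ℝ≥0∞) ^ q := by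
          exact ENNReal.rpow_le_rpow (by exact_mod_cast h2c) hq0.le
    _ = ((b : ℝ≥0∞) ^ (q⁻¹ : ℝ)) ^ q := by
          rw [ENNReal.coe_rpow_of_nonneg _ (by positivity)]
    _ = (b : ℝ≥0∞) ^ (q⁻¹ * q) := by rw [← ENNReal.rpow_mul]
    _ = (b : ℝ≥0∞) := by rw [inv_mul_cancel₀ hq0.ne', ENNReal.rpow_one]
    _ ≤ β := hbβ
  have hc_rho : (c : ℝ≥0∞) ≤ ENNReal.ofReal (ρ / 4) :=
    ENNReal.coe_le_coe.mpr (min_le_right _ _)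
  -- the thickened cover
  set τ : ℕ → ℝ≥0 := fun n => c * 2⁻¹ ^ n with hτdef
  have hτ0 : ∀ n, (0 : ℝ≥0) < τ n := fun n => by positivity
  set u : ℕ → Set X := fun n => Metric.thickening (τ n) (t n) with hudef
  refine ⟨⋃ n, u n, isOpen_iUnion fun n => Metric.isOpen_thickening, ?_, ?_⟩
  · refine hcov.trans (iUnion_mono fun n => ?_)
    exact Metric.self_subset_thickening (by exact_mod_cast hτ0 n) _
  refine ⟨u, subset_rfl, ?_, ?_⟩
  · -- diameters
    intro n
    have h1 : EMetric.diam (u n) ≤ EMetric.diam (t n) + 2 * (τ n : ℝ≥0∞) :=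
      Metric.ediam_thickening_le (τ n)
    have h2 : (τ n : ℝ≥0∞) ≤ (c : ℝ≥0∞) := by
      have : τ n ≤ c := by
        simp only [hτdef]
        calc c * 2⁻¹ ^ n ≤ c * 1 := by
              refine mul_le_mul_right (pow_le_one₀ (by norm_num) (by norm_num)) c
        _ = c := mul_one c
      exact_mod_cast this
    calc EMetric.diam (u n) ≤ EMetric.diam (t n) + 2 * (τ n : ℝ≥0∞) := h1
    _ ≤ ENNReal.ofReal (ρ / 2) + 2 * ENNReal.ofReal (ρ / 4) := by
        exact add_le_add (hdiam n) (mul_le_mul_right (h2.trans hc_rho) 2)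
    _ = ENNReal.ofReal ρ := by
        rw [show (2 : ℝ≥0∞) = ENNReal.ofReal 2 by simp]
        rw [← ENNReal.ofReal_mul (by norm_num)]
        rw [← ENNReal.ofReal_add (by linarith) (by positivity)]
        ring_nf
  · -- content
    have pow_add_le : ∀ a b' : ℝ≥0∞, (a + b') ^ q ≤ P * a ^ q + P * b' ^ q := by
      intro a b'
      have h1 : a + b' ≤ 2 * max a b' := by
        rw [two_mul]
        exact add_le_add (le_max_left _ _) (le_max_right _ _)
      calc (a + b') ^ q ≤ (2 * max a b') ^ q := ENNReal.rpow_le_rpow h1 hq0.le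
      _ = P * (max a b') ^ q := ENNReal.mul_rpow_of_nonneg _ _ hq0.le
      _ ≤ P * (a ^ q + b' ^ q) := by
          refine mul_le_mul_right ?_ P
          rcases le_total a b' with hab | hab
          · rw [max_eq_right hab]; exact le_add_self
          · rw [max_eq_left hab]; exact self_le_add_right _ _
      _ = P * a ^ q + P * b' ^ q := mul_add _ _ _
    have hterm2 : ∀ n : ℕ, EMetric.diam (u n) ^ q ≤
        P * EMetric.diam (t n) ^ q + P * (((2 * c : ℝ≥0) : ℝ≥0∞) ^ q * rt ^ n) := by
      intro n
      have h1 : EMetric.diam (u n) ≤ EMetric.diam (t n) + 2 * (τ n : ℝ≥0∞) :=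
        Metric.ediam_thickening_le (τ n)
      have h2 : EMetric.diam (u n) ^ q ≤ (EMetric.diam (t n) + 2 * (τ n : ℝ≥0∞)) ^ q :=
        ENNReal.rpow_le_rpow h1 hq0.le
      refine h2.trans ((pow_add_le _ _).trans ?_)
      refine add_le_add_right (mul_le_mul_right (le_of_eq ?_) P) _
      have h3 : (2 * (τ n : ℝ≥0∞)) = ((2 * c : ℝ≥0) : ℝ≥0∞) * ((2⁻¹ : ℝ≥0∞)) ^ n := by
        simp only [hτdef]
        push_cast
        ring
      rw [h3, ENNReal.mul_rpow_of_nonneg _ _ hq0.le]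
      congr 1
      rw [← ENNReal.rpow_natCast (2⁻¹ : ℝ≥0∞) n, ← ENNReal.rpow_mul,
        mul_comm (n : ℝ) q, ENNReal.rpow_mul, ENNReal.rpow_natCast]
    calc ∑' n, EMetric.diam (u n) ^ q
        ≤ ∑' n, (P * EMetric.diam (t n) ^ q + P * (((2 * c : ℝ≥0) : ℝ≥0∞) ^ q * rt ^ n)) :=
          ENNReal.tsum_le_tsum hterm2
    _ = P * (∑' n, EMetric.diam (t n) ^ q)
        + P * (((2 * c : ℝ≥0) : ℝ≥0∞) ^ q * ∑' n, rt ^ n) := by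
        rw [ENNReal.tsum_add, ENNReal.tsum_mul_left, ENNReal.tsum_mul_left,
          ENNReal.tsum_mul_left]
    _ ≤ Hf + Hf := by
        refine add_le_add ?_ ?_
        · calc P * (∑' n, EMetric.diam (t n) ^ q) ≤ P * ε₀ :=
                mul_le_mul_right hsum'.le P
          _ ≤ Hf := ENNReal.mul_div_le
        · rw [ENNReal.tsum_geometric]
          have hPG0 : P * G ≠ 0 := mul_ne_zero hP0 hG0
          have hPGtop : P * G ≠ ⊤ := ENNReal.mul_ne_top hPtop hGtop
          calc P * (((2 * c : ℝ≥0) : ℝ≥0∞) ^ q * (1 - rt)⁻¹)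
              = ((2 * c : ℝ≥0) : ℝ≥0∞) ^ q * (P * G) := by rw [hGdef]; ring
          _ ≤ β * (P * G) := mul_le_mul_left hc_pow _
          _ = Hf := ENNReal.div_mul_cancel hPG0 hPGtop
    _ = ENNReal.ofReal η := ENNReal.add_halves _

end AuxCover2


section AuxAbsorb

variable {X : Type*} [MetricSpace X] [CompactSpace X]

lemma one_div_cast_anti {i j : ℕ} (hij : i ≤ j) : (1:ℝ)/(j+1) ≤ 1/(i+1) := by
  apply one_div_le_one_div_of_le
  · positivity
  · exact_mod_cast add_le_add_left (Nat.cast_le.mpr hij) 1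

lemma slab_absorb {φ : X → ℝ} (hφ : Continuous φ) {A : Set X} (hA : IsClosed A)
    {r : ℝ} {W : Set X} (hW : IsOpen W) (h : φ ⁻¹' {r} ∩ A ⊆ W) :
    ∃ δ : ℝ, 0 < δ ∧ φ ⁻¹' (Set.Icc (r - δ) (r + δ)) ∩ A ⊆ W := by
  set V : ℕ → Set X := fun i => φ ⁻¹' (Set.Icc (r - 1/(i+1)) (r + 1/(i+1))) ∩ A with hV
  have hVanti : Antitone V := by
    intro i j hij
    refine inter_subset_inter_left _ (preimage_mono (Icc_subset_Icc ?_ ?_)) <;>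
      (have := one_div_cast_anti hij; linarith)
  have hVcl : ∀ i, IsClosed (V i) := fun i => (isClosed_Icc.preimage hφ).inter hA
  have hVcpt : ∀ i, IsCompact (V i) := fun i => (hVcl i).isCompact
  have hVint : ⋂ i, V i ⊆ φ ⁻¹' {r} ∩ A := by
    intro x hx
    simp only [mem_iInter, hV, mem_inter_iff, mem_preimage, mem_Icc] at hx
    have hxr : φ x = r := by
      by_contra hne
      have habs : 0 < |φ x - r| := abs_pos.mpr (sub_ne_zero.mpr hne)
      obtain ⟨i, hi⟩ := exists_nat_one_div_lt habs
      have h1 := (hx i).1.1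
      have h2 := (hx i).1.2
      rcases abs_cases (φ x - r) with ⟨heq, _⟩ | ⟨heq, _⟩ <;> rw [heq] at hi <;> linarith
    exact ⟨by simp [hxr], (hx 0).2⟩
  have hVdir : Directed (· ⊇ ·) V :=
    fun i j => ⟨max i j, hVanti (le_max_left i j), hVanti (le_max_right i j)⟩
  obtain ⟨i, hi⟩ := exists_subset_nhds_of_isCompact' hVdir hVcpt hVcl
    (fun x hx => hW.mem_nhds (h (hVint hx)))
  exact ⟨1/(i+1), by positivity, hi⟩

variable [MeasurableSpace X] [BorelSpace X]

lemma exists_good_radius {φ : X → ℝ} (hφ : Continuous φ) {A : Set X} (hA : IsClosed A)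
    {q : ℝ} (hq0 : 0 < q)
    (hnull : volume {r : ℝ | ENNReal.ofReal q ≤ dimH (φ ⁻¹' {r} ∩ A)} = 0)
    (M : ℝ) {η ρ ν : ℝ} (hη : 0 < η) (hρ : 0 < ρ) (hν : 0 < ν) :
    ∃ (δ : ℝ) (B : Set ℝ), 0 < δ ∧ δ ≤ 1 ∧ volume B ≤ ENNReal.ofReal ν ∧
      ∀ r ∈ Set.Icc (-M) M, r ∉ B → ∃ W : Set X, IsOpen W ∧
        φ ⁻¹' (Set.Icc (r - δ) (r + δ)) ∩ A ⊆ W ∧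
        CoverAt q (ENNReal.ofReal η) (ENNReal.ofReal ρ) W := by
  classical
  set good : ℝ → ℝ → Prop := fun δ r => ∃ W : Set X, IsOpen W ∧
    φ ⁻¹' (Set.Icc (r - δ) (r + δ)) ∩ A ⊆ W ∧
    CoverAt q (ENNReal.ofReal η) (ENNReal.ofReal ρ) W with hgood
  have good_anti : ∀ δ δ' r, δ' ≤ δ → good δ r → good δ' r := by
    rintro δ δ' r hle ⟨W, h1, h2, h3⟩
    exact ⟨W, h1, (inter_subset_inter_left _ (preimage_mono
      (Icc_subset_Icc (by linarith) (by linarith)))).trans h2, h3⟩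
  set O : ℕ → Set ℝ := fun m => interior {r | good (1/(m+1)) r} with hO
  have hOmono : Monotone O := by
    intro i j hij
    exact interior_mono fun r hr => good_anti _ _ r (one_div_cast_anti hij) hr
  have hcover : ∀ r : ℝ, dimH (φ ⁻¹' {r} ∩ A) < ENNReal.ofReal q → ∃ m, r ∈ O m := by
    intro r hr
    obtain ⟨W, hWo, hWs, hWc⟩ := exists_isOpen_coverAt hq0 hr hη hρ
    obtain ⟨δ₀, hδ₀, habs⟩ := slab_absorb hφ hA hWo hWs
    obtain ⟨m, hm⟩ := exists_nat_one_div_lt (half_pos hδ₀)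
    refine ⟨m, ?_⟩
    refine mem_interior.mpr ⟨Metric.ball r (δ₀/2), ?_, Metric.isOpen_ball,
      Metric.mem_ball_self (half_pos hδ₀)⟩
    intro r' hr'
    have hdist : |r' - r| < δ₀/2 := by
      have := Metric.mem_ball.mp hr'
      rwa [Real.dist_eq] at this
    rcases abs_lt.mp hdist with ⟨hd1, hd2⟩
    refine ⟨W, hWo, ?_, hWc⟩
    refine (inter_subset_inter_left _ (preimage_mono (Icc_subset_Icc ?_ ?_))).trans habs
    · have := hm.le; linarith
    · have := hm.le; linarith
  set D : ℕ → Set ℝ := fun m => Set.Icc (-M) M \ O m with hD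
  have hDmeas : ∀ m, MeasurableSet (D m) := fun m =>
    measurableSet_Icc.diff isOpen_interior.measurableSet
  have hDanti : Antitone D := fun i j hij => diff_subset_diff_right (hOmono hij)
  have hDfin : volume (D 0) ≠ ⊤ := by
    refine ne_top_of_le_ne_top ?_ (measure_mono diff_subset)
    rw [Real.volume_Icc]
    exact ENNReal.ofReal_ne_top
  have hiInter : volume (⋂ m, D m) = 0 := by
    refine measure_mono_null ?_ hnull
    intro r hr
    simp only [mem_iInter, hD, mem_diff] at hr
    by_contra hcon
    have hdim : dimH (φ ⁻¹' {r} ∩ A) < ENNReal.ofReal q := lt_of_not_ge hcon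
    obtain ⟨m, hm⟩ := hcover r hdim
    exact (hr m).2 hm
  have hinf : (⨅ m, volume (D m)) = 0 := by
    rw [← hDanti.measure_iInter (fun m => (hDmeas m).nullMeasurableSet) ⟨0, hDfin⟩]
    exact hiInter
  have hex : ∃ m, volume (D m) < ENNReal.ofReal ν := by
    by_contra hcon
    push_neg at hcon
    have h1 : ENNReal.ofReal ν ≤ ⨅ m, volume (D m) := le_iInf hcon
    rw [hinf] at h1
    exact absurd (le_antisymm h1 zero_le) (ENNReal.ofReal_pos.mpr hν).ne'
  obtain ⟨m, hm⟩ := hex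
  refine ⟨1/(m+1), D m, by positivity, ?_, hm.le, ?_⟩
  · rw [div_le_one (by positivity)]
    linarith [Nat.cast_nonneg (α := ℝ) m]
  · intro r hrIcc hrB
    have hrO : r ∈ O m := by
      by_contra hcon
      exact hrB ⟨hrIcc, hcon⟩
    have h2 : r ∈ {r | good (1/(m+1)) r} := interior_subset hrO
    exact h2

end AuxAbsorb

lemma exists_pow_half_lt (ε : ℝ≥0∞) (hε : 0 < ε) :
    ∃ M : ℕ, ENNReal.ofReal ((1/2 : ℝ)^M) < ε := by
  rcases eq_or_ne ε ⊤ with h | h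
  · exact ⟨0, by simp [h]⟩
  · have hε' : 0 < ε.toReal := ENNReal.toReal_pos hε.ne' h
    obtain ⟨M, hM⟩ := exists_pow_lt_of_lt_one hε' (by norm_num : (1/2 : ℝ) < 1)
    refine ⟨M, ?_⟩
    calc ENNReal.ofReal ((1/2 : ℝ)^M) < ENNReal.ofReal ε.toReal :=
          (ENNReal.ofReal_lt_ofReal_iff hε').mpr hM
    _ = ε := ENNReal.ofReal_toReal h

lemma exists_pow_half_le (ε : ℝ≥0∞) (hε : 0 < ε) :
    ∃ M : ℕ, ENNReal.ofReal ((1/2 : ℝ)^M) ≤ ε := by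
  obtain ⟨M, hM⟩ := exists_pow_half_lt ε hε
  exact ⟨M, hM.le⟩

lemma pow_half_anti {M n : ℕ} (h : M ≤ n) : ((1:ℝ)/2)^n ≤ (1/2)^M :=
  pow_le_pow_of_le_one (by norm_num) (by norm_num) h

noncomputable section

/-- The space `C₁^α(F)` of 1-Hölder-α functions on `F`, with the supremum metric. -/
def HolderBall (p : ℕ) (α : ℝ) (F : Set (Euc p)) :=
  {f : BoundedContinuousFunction ↥F ℝ // ∀ x y : ↥F, |f x - f y| ≤ dist x y ^ α}

instance (p : ℕ) (α : ℝ) (F : Set (Euc p)) : MetricSpace (HolderBall p α F) :=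
  inferInstanceAs (MetricSpace
    {f : BoundedContinuousFunction ↥F ℝ // ∀ x y : ↥F, |f x - f y| ≤ dist x y ^ α})

/-- `D_*^f(A) = sup{d : λ{r : dim_H (f⁻¹(r) ∩ A) ≥ d} > 0}`. -/
def DstarOn {p : ℕ} {F : Set (Euc p)} (f : ↥F → ℝ) (A : Set ↥F) : ℝ :=
  sSup {d : ℝ | 0 < volume {r : ℝ | ENNReal.ofReal d ≤ dimH (f ⁻¹' {r} ∩ A)}}

/-- `D_*(α, F)`: the sup over dense `G_δ` subsets `𝒢` of `C₁^α(F)` of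
`inf{D_*^f : f ∈ 𝒢}`. -/
def DstarAlpha (p : ℕ) (α : ℝ) (F : Set (Euc p)) : ℝ :=
  sSup {v : ℝ | ∃ G : Set (HolderBall p α F), Dense G ∧ IsGδ G ∧
    v = sInf ((fun f : HolderBall p α F =>
      DstarOn (fun x : ↥F => f.1 x) Set.univ) '' G)}

theorem stmt11 (p : ℕ) (F : Set (Euc p)) (hF : IsCompact F)
    (α : ℝ) (hα : 0 < α) (hα1 : α ≤ 1)
    (E : Set (Euc p)) (hE : IsClosed E)
    (U : Set (HolderBall p α F)) (hU : IsOpen U)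
    (f : ℕ → HolderBall p α F) (hfU : ∀ k, f k ∈ U)
    (hdense : U ⊆ closure (Set.range f)) :
    ∃ G : Set (HolderBall p α F), G ⊆ U ∧ IsGδ G ∧ U ⊆ closure G ∧
      ∀ g ∈ G, DstarOn (fun x : ↥F => g.1 x) (Subtype.val ⁻¹' E) ≤
        ⨆ k : ℕ, DstarOn (fun x : ↥F => (f k).1 x) (Subtype.val ⁻¹' E) := by
  classical
  haveI : CompactSpace ↥F := isCompact_iff_compactSpace.mp hF
  set A : Set ↥F := Subtype.val ⁻¹' E with hAdef
  have hAcl : IsClosed A := hE.preimage continuous_subtype_val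
  have hdim_le : ∀ s : Set ↥F, dimH s ≤ ENNReal.ofReal (p : ℝ) := by
    intro s
    have h1 : dimH s = dimH (Subtype.val '' s) := (isometry_subtype_coe.dimH_image s).symm
    rw [h1, ENNReal.ofReal_natCast]
    calc dimH (Subtype.val '' s) ≤ dimH (Set.univ : Set (Euc p)) :=
          dimH_mono (subset_univ _)
    _ = (Module.finrank ℝ (Euc p) : ℝ≥0∞) := Real.dimH_univ_eq_finrank (Euc p)
    _ = (p : ℝ≥0∞) := by rw [finrank_euclideanSpace_fin]
  have hmem_le : ∀ (φ : ↥F → ℝ) (d : ℝ),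
      0 < volume {r : ℝ | ENNReal.ofReal d ≤ dimH (φ ⁻¹' {r} ∩ A)} → d ≤ (p : ℝ) := by
    intro φ d hd
    obtain ⟨r, hr⟩ := MeasureTheory.nonempty_of_measure_ne_zero hd.ne'
    have h2 : ENNReal.ofReal d ≤ ENNReal.ofReal (p : ℝ) := le_trans hr (hdim_le _)
    exact (ENNReal.ofReal_le_ofReal_iff (by positivity)).mp h2
  have hbddS : ∀ φ : ↥F → ℝ, BddAbove {d : ℝ |
      0 < volume {r : ℝ | ENNReal.ofReal d ≤ dimH (φ ⁻¹' {r} ∩ A)}} :=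
    fun φ => ⟨p, fun d hd => hmem_le φ d hd⟩
  have hmem0 : ∀ φ : ↥F → ℝ, (0:ℝ) ∈ {d : ℝ |
      0 < volume {r : ℝ | ENNReal.ofReal d ≤ dimH (φ ⁻¹' {r} ∩ A)}} := by
    intro φ
    have h1 : {r : ℝ | ENNReal.ofReal (0:ℝ) ≤ dimH (φ ⁻¹' {r} ∩ A)} = Set.univ :=
      eq_univ_of_forall fun r => by simp
    simp only [mem_setOf_eq, h1, Real.volume_univ]
    exact ENNReal.zero_lt_top
  have hD0 : ∀ φ : ↥F → ℝ, 0 ≤ DstarOn φ A := fun φ => le_csSup (hbddS φ) (hmem0 φ)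
  have hDp : ∀ φ : ↥F → ℝ, DstarOn φ A ≤ (p : ℝ) :=
    fun φ => Real.sSup_le (fun d hd => hmem_le φ d hd) (by positivity)
  set S : ℝ := ⨆ k : ℕ, DstarOn (fun x : ↥F => (f k).1 x) A with hSdef
  have hbddR : BddAbove (Set.range fun k : ℕ => DstarOn (fun x : ↥F => (f k).1 x) A) :=
    ⟨p, by rintro _ ⟨k, rfl⟩; exact hDp _⟩
  have hSk : ∀ k, DstarOn (fun x : ↥F => (f k).1 x) A ≤ S := fun k => le_ciSup hbddR k
  have hS0 : 0 ≤ S := le_trans (hD0 _) (hSk 0)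
  set qq : ℕ → ℝ := fun j => S + 1/(3*(j+1)) with hqqdef
  set qt : ℕ → ℝ := fun j => S + 2/(3*(j+1)) with hqtdef
  have hSqq : ∀ j, S < qq j := fun j => lt_add_of_pos_right S (by positivity)
  have hqq0 : ∀ j, 0 < qq j := fun j => lt_of_le_of_lt hS0 (hSqq j)
  have hqqlt : ∀ j, qq j < qt j := by
    intro j
    have hpos : (0:ℝ) < 3*((j:ℝ)+1) := by positivity
    have h1 : (1:ℝ)/(3*((j:ℝ)+1)) < 2/(3*((j:ℝ)+1)) := by
      rw [div_lt_div_iff₀ hpos hpos]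
      nlinarith
    simp only [hqqdef, hqtdef]
    linarith
  have hqt0 : ∀ j, 0 < qt j := fun j => lt_trans (hqq0 j) (hqqlt j)
  have hnullk : ∀ k j, volume {r : ℝ | ENNReal.ofReal (qq j) ≤
      dimH ((fun x : ↥F => (f k).1 x) ⁻¹' {r} ∩ A)} = 0 := by
    intro k j
    by_contra hcon
    have hpos : 0 < volume {r : ℝ | ENNReal.ofReal (qq j) ≤
        dimH ((fun x : ↥F => (f k).1 x) ⁻¹' {r} ∩ A)} := pos_iff_ne_zero.mpr hcon
    have h1 : qq j ≤ DstarOn (fun x : ↥F => (f k).1 x) A := le_csSup (hbddS _) hpos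
    exact absurd (h1.trans (hSk k)) (not_le.mpr (hSqq j))
  have hsel : ∀ (k n j : ℕ), ∃ (δ : ℝ) (B : Set ℝ), 0 < δ ∧ δ ≤ 1 ∧
      volume B ≤ ENNReal.ofReal ((1/2 : ℝ)^n) ∧
      ∀ r ∈ Set.Icc (-(‖(f k).1‖ + 2)) (‖(f k).1‖ + 2), r ∉ B → ∃ W : Set ↥F, IsOpen W ∧
        (fun x : ↥F => (f k).1 x) ⁻¹' (Set.Icc (r - δ) (r + δ)) ∩ A ⊆ W ∧
        CoverAt (qq j) (ENNReal.ofReal ((1/2 : ℝ)^n)) (ENNReal.ofReal ((1/2 : ℝ)^n)) W := by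
    intro k n j
    exact exists_good_radius (by continuity) hAcl (hqq0 j) (hnullk k j) _
      (by positivity) (by positivity) (by positivity)
  choose δf Bf hδ0 hδ1 hBvol hBgood using hsel
  refine ⟨U ∩ ⋂ (nj : ℕ × ℕ), ⋃ k, Metric.ball (f k) (δf k nj.1 nj.2),
    inter_subset_left, ?_, ?_, ?_⟩
  · exact hU.isGδ.inter (IsGδ.iInter fun nj =>
      (isOpen_iUnion fun k => Metric.isOpen_ball).isGδ)
  · have hrange : Set.range f ⊆
        U ∩ ⋂ (nj : ℕ × ℕ), ⋃ k, Metric.ball (f k) (δf k nj.1 nj.2) := by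
      rintro _ ⟨k, rfl⟩
      exact ⟨hfU k, mem_iInter.mpr fun nj =>
        mem_iUnion.mpr ⟨k, Metric.mem_ball_self (hδ0 k nj.1 nj.2)⟩⟩
    exact fun u hu => closure_mono hrange (hdense hu)
  rintro g ⟨hgU, hgI⟩
  have hgball : ∀ n j : ℕ, ∃ k, dist g (f k) < δf k n j := by
    intro n j
    obtain ⟨k, hk⟩ := mem_iUnion.mp (mem_iInter.mp hgI (n, j))
    exact ⟨k, Metric.mem_ball.mp hk⟩
  have hnullg : ∀ j, volume {r : ℝ | ENNReal.ofReal (qt j) ≤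
      dimH ((fun x : ↥F => g.1 x) ⁻¹' {r} ∩ A)} = 0 := by
    intro j
    choose κ hκ using fun n => hgball n j
    have hdistco : ∀ (n : ℕ) (x : ↥F), |g.1 x - (f (κ n)).1 x| ≤ dist g (f (κ n)) := by
      intro n x
      change _ ≤ dist g.1 (f (κ n)).1
      have h1 := BoundedContinuousFunction.dist_coe_le_dist (f := g.1) (g := (f (κ n)).1) x
      rwa [Real.dist_eq] at h1
    set Bad : ℕ → Set ℝ := fun n => Bf (κ n) n j with hBaddef
    have hsubset : {r : ℝ | ENNReal.ofReal (qt j) ≤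
        dimH ((fun x : ↥F => g.1 x) ⁻¹' {r} ∩ A)}
        ⊆ ⋃ M : ℕ, ⋂ n ∈ Set.Ici M, Bad n := by
      intro r hr
      simp only [mem_setOf_eq] at hr
      have hne : ((fun x : ↥F => g.1 x) ⁻¹' {r} ∩ A).Nonempty := by
        by_contra hcon
        rw [not_nonempty_iff_eq_empty] at hcon
        rw [hcon, dimH_empty] at hr
        exact absurd hr (not_le.mpr (ENNReal.ofReal_pos.mpr (hqt0 j)))
      obtain ⟨x, hx1, hx2⟩ := hne
      have hx1' : g.1 x = r := hx1
      have hrange : ∀ n, r ∈ Set.Icc (-(‖(f (κ n)).1‖ + 2)) (‖(f (κ n)).1‖ + 2) := by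
        intro n
        have h1 : |g.1 x - (f (κ n)).1 x| ≤ 1 :=
          le_trans (hdistco n x) (le_trans (hκ n).le (hδ1 _ _ _))
        have h2 : |(f (κ n)).1 x| ≤ ‖(f (κ n)).1‖ := by
          have h2' := BoundedContinuousFunction.norm_coe_le_norm ((f (κ n)).1) x
          rwa [Real.norm_eq_abs] at h2'
        rw [← hx1']
        rcases abs_le.mp h1 with ⟨ha1, ha2⟩
        rcases abs_le.mp h2 with ⟨hb1, hb2⟩
        rw [Set.mem_Icc]
        constructor <;> linarith
      have hclaim : ∃ M, ∀ n, M ≤ n → r ∈ Bad n := by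
        by_contra hcon
        push_neg at hcon
        have hdimle : dimH ((fun x : ↥F => g.1 x) ⁻¹' {r} ∩ A)
            ≤ ENNReal.ofReal (qq j) := by
          refine dimH_le_of_forall_coverAt (hqq0 j) ?_
          intro ε hε
          obtain ⟨M, hM⟩ := exists_pow_half_le ε hε
          obtain ⟨n, hnM, hnbad⟩ := hcon M
          obtain ⟨W, hWo, hWs, hWc⟩ := hBgood (κ n) n j r (hrange n) hnbad
          refine ⟨ENNReal.ofReal ((1/2 : ℝ)^n), ENNReal.ofReal ((1/2 : ℝ)^n), ?_, ?_, ?_⟩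
          · exact le_trans (ENNReal.ofReal_le_ofReal (pow_half_anti hnM)) hM
          · exact le_trans (ENNReal.ofReal_le_ofReal (pow_half_anti hnM)) hM
          · refine (hWc.mono ?_)
            refine subset_trans ?_ hWs
            rintro y ⟨hy1, hy2⟩
            have hy1' : g.1 y = r := hy1
            refine ⟨?_, hy2⟩
            simp only [mem_preimage, mem_Icc]
            have h4 := hdistco n y
            have h5 := lt_of_le_of_lt h4 (hκ n)
            rw [hy1'] at h5
            rcases abs_lt.mp h5 with ⟨hc1, hc2⟩
            constructor <;> linarith
        have h6 : ENNReal.ofReal (qq j) < ENNReal.ofReal (qt j) :=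
          (ENNReal.ofReal_lt_ofReal_iff (hqt0 j)).mpr (hqqlt j)
        exact absurd hr (not_le.mpr (lt_of_le_of_lt hdimle h6))
      obtain ⟨M, hM⟩ := hclaim
      exact mem_iUnion.mpr ⟨M, mem_biInter fun n hn => hM n hn⟩
    refine measure_mono_null hsubset (measure_iUnion_null fun M => ?_)
    have hle : ∀ n, M ≤ n → volume (⋂ n ∈ Set.Ici M, Bad n)
        ≤ ENNReal.ofReal ((1/2 : ℝ)^n) := by
      intro n hn
      exact le_trans (measure_mono (biInter_subset_of_mem hn)) (hBvol (κ n) n j)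
    by_contra hcon
    have hpos : 0 < volume (⋂ n ∈ Set.Ici M, Bad n) := pos_iff_ne_zero.mpr hcon
    obtain ⟨M', hM'⟩ := exists_pow_half_lt _ hpos
    have h7 := hle (max M M') (le_max_left _ _)
    have h8 : ENNReal.ofReal ((1/2 : ℝ)^(max M M')) ≤ ENNReal.ofReal ((1/2 : ℝ)^M') :=
      ENNReal.ofReal_le_ofReal (pow_half_anti (le_max_right _ _))
    exact absurd (lt_of_le_of_lt (h7.trans h8) hM') (lt_irrefl _)
  refine Real.sSup_le ?_ hS0
  intro d hd
  simp only [mem_setOf_eq] at hd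
  by_contra hcon
  push_neg at hcon
  obtain ⟨j, hj⟩ : ∃ j : ℕ, qt j < d := by
    obtain ⟨j, hj⟩ := exists_nat_one_div_lt (sub_pos.mpr hcon)
    refine ⟨j, ?_⟩
    have h9 : (2:ℝ)/(3*(j+1)) ≤ 1/(j+1) := by
      rw [div_le_div_iff₀ (by positivity) (by positivity)]
      nlinarith [Nat.cast_nonneg (α := ℝ) j]
    simp only [hqtdef]
    linarith
  have hsub : {r : ℝ | ENNReal.ofReal d ≤ dimH ((fun x : ↥F => g.1 x) ⁻¹' {r} ∩ A)}
      ⊆ {r : ℝ | ENNReal.ofReal (qt j) ≤ dimH ((fun x : ↥F => g.1 x) ⁻¹' {r} ∩ A)} :=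
    fun r hr => le_trans (ENNReal.ofReal_le_ofReal hj.le) hr
  have h10 := measure_mono_null hsub (hnullg j)
  rw [h10] at hd
  exact absurd hd (lt_irrefl 0)
end
end

section
/- Let F ⊆ ℝ^p with diam(F) ≤ 1, let 0 < α < α' ≤ 1, let f ∈ C^{α'}_M(F) (M-Hölder-α') and g ∈ C^α_{c}(F) (c-Hölder-α) with 0 < c < 1, and suppose ‖f − g‖_∞ ≤ δ·M for some δ > 0. Set c'' = (1+c)/2. If 2δM ≤ (c''−c)·(c''/M)^{α/(α'−α)}, then f is c''-Hölder-α on F, i.e. |f(x)−f(y)| ≤ c''|x−y|^α for all x,y ∈ F. -/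
open Set Metric

noncomputable section

theorem stmt14 (p : ℕ) (F : Set (Euc p)) (hdiam : Metric.diam F ≤ 1)
    (α α' M c δ : ℝ) (h0 : 0 < α) (h1 : α < α') (h2 : α' ≤ 1)
    (hc0 : 0 < c) (hc1 : c < 1) (hM : 0 < M) (hδ : 0 < δ)
    (f g : Euc p → ℝ)
    (hf : ∀ x ∈ F, ∀ y ∈ F, |f x - f y| ≤ M * dist x y ^ α')
    (hg : ∀ x ∈ F, ∀ y ∈ F, |g x - g y| ≤ c * dist x y ^ α)
    (hfg : ∀ x ∈ F, |f x - g x| ≤ δ * M)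
    (hkey : 2 * δ * M ≤ ((1 + c) / 2 - c) * (((1 + c) / 2) / M) ^ (α / (α' - α))) :
    ∀ x ∈ F, ∀ y ∈ F, |f x - f y| ≤ (1 + c) / 2 * dist x y ^ α := by
  intro x hx y hy
  have hc'' : (0:ℝ) < (1 + c) / 2 := by linarith
  have hαα : (0:ℝ) < α' - α := by linarith
  set t : ℝ := (((1 + c) / 2) / M) ^ ((α' - α)⁻¹) with ht
  have hbpos : (0:ℝ) < ((1 + c) / 2) / M := by positivity
  have htpos : 0 < t := Real.rpow_pos_of_pos hbpos _
  have hr : 0 ≤ dist x y := dist_nonneg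
  have htpow : t ^ (α' - α) = ((1 + c) / 2) / M := by
    rw [ht, ← Real.rpow_mul hbpos.le, inv_mul_cancel₀ hαα.ne', Real.rpow_one]
  have htpowα : t ^ α = (((1 + c) / 2) / M) ^ (α / (α' - α)) := by
    rw [ht, ← Real.rpow_mul hbpos.le]
    congr 1
    field_simp
  rcases le_or_gt (dist x y) t with h | h
  · rcases eq_or_lt_of_le hr with h0' | h0'
    · have hd : dist x y = 0 := h0'.symm
      have h1' := hf x hx y hy
      rw [hd, Real.zero_rpow (by linarith : α' ≠ 0)] at h1'
      rw [hd, Real.zero_rpow h0.ne', mul_zero]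
      linarith
    · have key : M * dist x y ^ α' ≤ (1 + c) / 2 * dist x y ^ α := by
        have hsplit : dist x y ^ α' = dist x y ^ (α' - α) * dist x y ^ α := by
          rw [← Real.rpow_add h0', sub_add_cancel]
        rw [hsplit]
        have hle : dist x y ^ (α' - α) ≤ t ^ (α' - α) :=
          Real.rpow_le_rpow hr h hαα.le
        rw [htpow] at hle
        have hαpos : 0 < dist x y ^ α := Real.rpow_pos_of_pos h0' _
        calc M * (dist x y ^ (α' - α) * dist x y ^ α)
            ≤ M * ((((1 + c) / 2) / M) * dist x y ^ α) := by
              apply mul_le_mul_of_nonneg_left _ hM.le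
              exact mul_le_mul_of_nonneg_right hle hαpos.le
          _ = (1 + c) / 2 * dist x y ^ α := by field_simp
      exact (hf x hx y hy).trans key
  · have htα : t ^ α ≤ dist x y ^ α := Real.rpow_le_rpow htpos.le h.le h0.le
    have h2δ : 2 * δ * M ≤ ((1 + c) / 2 - c) * dist x y ^ α := by
      calc 2 * δ * M ≤ ((1 + c) / 2 - c) * (((1 + c) / 2) / M) ^ (α / (α' - α)) := hkey
        _ = ((1 + c) / 2 - c) * t ^ α := by rw [htpowα]
        _ ≤ ((1 + c) / 2 - c) * dist x y ^ α := by
            apply mul_le_mul_of_nonneg_left htα (by linarith)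
    calc |f x - f y| ≤ |f x - g x| + |g x - g y| + |g y - f y| := by
          have := abs_sub_le (f x) (g x) (f y)
          have := abs_sub_le (g x) (g y) (f y)
          calc |f x - f y| ≤ |f x - g x| + |g x - f y| := abs_sub_le _ _ _
            _ ≤ |f x - g x| + (|g x - g y| + |g y - f y|) := by
                linarith [abs_sub_le (g x) (g y) (f y)]
            _ = _ := by ring
      _ ≤ δ * M + c * dist x y ^ α + δ * M := by
          have h1' := hfg x hx
          have h2' := hfg y hy
          rw [abs_sub_comm (g y)]
          have h3' := hg x hx y hy
          linarith
      _ = 2 * δ * M + c * dist x y ^ α := by ring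
      _ ≤ ((1 + c) / 2 - c) * dist x y ^ α + c * dist x y ^ α := by linarith
      _ = (1 + c) / 2 * dist x y ^ α := by ring
end
end

section
/- Let F ⊂ ℝ^p be compact, 0 < α ≤ 1, and suppose that for some δ₀ > 0 and 0 < κ₀ < 1 there is a dense sequence (f_n) in C₁^α(F) with κ(f_n, δ₀) < κ₀ for all n, where κ(f, δ) = λ{r ∈ f(F) : dim_H f^{-1}(r) > D − δ} / λ(f(F)) and D = D_*(α, F). Then there exists a dense G_δ set 𝒢 ⊆ C₁^α(F) such that κ(f, δ₀) ≤ κ₀ for every f ∈ 𝒢. -/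
open Set Metric MeasureTheory Filter

open ENNReal NNReal Topology

set_option linter.unusedSectionVars false

noncomputable section


/-- `κ(f, δ) = λ{r ∈ f(F) : dim_H f⁻¹(r) > D - δ} / λ(f(F))`. -/
def kappa {p : ℕ} {F : Set (Euc p)} (f : ↥F → ℝ) (D δ : ℝ) : ℝ :=
  (volume {r ∈ Set.range f | ENNReal.ofReal (D - δ) < dimH (f ⁻¹' {r})}).toReal /
    (volume (Set.range f)).toReal

namespace Stmt18Aux

/-- The `∞`-premeasure: infimum over countable covers of `∑ (diam)^s`. -/
def Mpre {X : Type*} [EMetricSpace X] (s : ℝ) (E : Set X) : ℝ≥0∞ :=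
  ⨅ (t : ℕ → Set X) (_ : E ⊆ ⋃ n, t n), ∑' n, EMetric.diam (t n) ^ s

variable {X : Type*} [EMetricSpace X] {s : ℝ} {E E' : Set X}

lemma Mpre_le_sum (t : ℕ → Set X) (ht : E ⊆ ⋃ n, t n) :
    Mpre s E ≤ ∑' n, EMetric.diam (t n) ^ s :=
  iInf₂_le t ht

lemma Mpre_mono (h : E ⊆ E') : Mpre s E ≤ Mpre s E' :=
  le_iInf₂ fun t ht => Mpre_le_sum t (h.trans ht)

lemma Mpre_empty (hs : 0 < s) : Mpre s (∅ : Set X) = 0 := by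
  refine le_antisymm ?_ zero_le
  have := Mpre_le_sum (E := (∅ : Set X)) (s := s) (fun _ => (∅ : Set X)) (by simp)
  simpa [EMetric.diam, EMetric.diam_empty, ENNReal.zero_rpow_of_pos hs] using this

lemma nonempty_of_Mpre_ne_zero (hs : 0 < s) (h : Mpre s E ≠ 0) : E.Nonempty := by
  rcases eq_empty_or_nonempty E with rfl | hne
  · exact absurd (Mpre_empty hs) h
  · exact hne

lemma exists_cover_of_lt {b : ℝ≥0∞} (h : Mpre s E < b) :
    ∃ t : ℕ → Set X, (E ⊆ ⋃ n, t n) ∧ ∑' n, EMetric.diam (t n) ^ s < b := by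
  rw [Mpre, iInf_lt_iff] at h
  obtain ⟨t, ht⟩ := h
  rw [iInf_lt_iff] at ht
  obtain ⟨hcov, hsum⟩ := ht
  exact ⟨t, hcov, hsum⟩


section Hausdorff
variable [MeasurableSpace X] [BorelSpace X]

lemma Mpre_le_hausdorffMeasure (hs : 0 < s) (E : Set X) : Mpre s E ≤ μH[s] E := by
  rw [MeasureTheory.Measure.hausdorffMeasure_apply]
  refine le_iSup₂_of_le 1 one_pos ?_
  refine le_iInf fun t => le_iInf fun hcov => le_iInf fun _ => ?_
  refine (Mpre_le_sum t hcov).trans (ENNReal.tsum_le_tsum fun n => ?_)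
  rcases eq_empty_or_nonempty (t n) with h | h
  · simp [h, EMetric.diam, EMetric.diam_empty, ENNReal.zero_rpow_of_pos hs]
  · simp [h, EMetric.diam]

lemma hausdorffMeasure_eq_zero_of_Mpre_eq_zero (hs : 0 < s) (h : Mpre s E = 0) :
    μH[s] E = 0 := by
  refine le_antisymm ?_ zero_le
  rw [MeasureTheory.Measure.hausdorffMeasure_apply]
  refine iSup₂_le fun r hr => ?_
  refine ENNReal.le_of_forall_pos_le_add fun ε hε _ => ?_
  rw [zero_add]
  have hb : (0 : ℝ≥0∞) < min (r ^ s) ε := by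
    refine lt_min ?_ (by exact_mod_cast hε)
    simp only [pos_iff_ne_zero, Ne, ENNReal.rpow_eq_zero_iff]
    rintro (⟨rfl, -⟩ | ⟨-, hneg⟩)
    · exact lt_irrefl _ hr
    · exact absurd hs (not_lt.2 hneg.le)
  obtain ⟨t, hcov, hsum⟩ := exists_cover_of_lt (h ▸ hb : Mpre s E < min (r ^ s) ε)
  have hdiam : ∀ n, EMetric.diam (t n) ≤ r := by
    intro n
    by_contra hlt
    push_neg at hlt
    have : r ^ s ≤ EMetric.diam (t n) ^ s := ENNReal.rpow_le_rpow hlt.le hs.le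
    have h2 : EMetric.diam (t n) ^ s ≤ ∑' m, EMetric.diam (t m) ^ s := ENNReal.le_tsum n
    exact absurd ((this.trans h2).trans_lt (hsum.trans_le (min_le_left _ _))) (lt_irrefl _)
  calc (⨅ (t : ℕ → Set X) (_ : E ⊆ ⋃ n, t n) (_ : ∀ n, EMetric.diam (t n) ≤ r),
        ∑' n, ⨆ _ : (t n).Nonempty, EMetric.diam (t n) ^ s)
      ≤ ∑' n, ⨆ _ : (t n).Nonempty, EMetric.diam (t n) ^ s :=
        iInf_le_of_le t (iInf_le_of_le hcov (iInf_le_of_le hdiam le_rfl))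
    _ ≤ ∑' n, EMetric.diam (t n) ^ s := ENNReal.tsum_le_tsum fun n => iSup_le fun _ => le_rfl
    _ ≤ min (r ^ s) ε := hsum.le
    _ ≤ ε := min_le_right _ _

lemma Mpre_pos_of_lt_dimH (hs : 0 < s) (h : ENNReal.ofReal s < dimH E) :
    0 < Mpre s E := by
  rw [pos_iff_ne_zero]
  intro h0
  have hcoe : ((s.toNNReal : ℝ≥0) : ℝ≥0∞) = ENNReal.ofReal s := rfl
  have htop : μH[(s.toNNReal : ℝ)] E = ∞ :=
    hausdorffMeasure_of_lt_dimH (by rw [hcoe]; exact h)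
  rw [Real.coe_toNNReal s hs.le] at htop
  exact absurd (hausdorffMeasure_eq_zero_of_Mpre_eq_zero hs h0) (htop ▸ ENNReal.top_ne_zero)

lemma ofReal_le_dimH_of_Mpre_ne_zero (hs : 0 < s) (h : Mpre s E ≠ 0) :
    ENNReal.ofReal s ≤ dimH E := by
  have h1 : μH[s] E ≠ 0 := by
    intro h0
    exact h (le_antisymm (h0 ▸ Mpre_le_hausdorffMeasure hs E) zero_le)
  have hcoe : ((s.toNNReal : ℝ≥0) : ℝ≥0∞) = ENNReal.ofReal s := rfl
  rw [← hcoe]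
  refine le_dimH_of_hausdorffMeasure_ne_zero (d := s.toNNReal) ?_
  rwa [Real.coe_toNNReal s hs.le]

end Hausdorff


lemma tsum_half_pow : (∑' n : ℕ, ((2 : ℝ≥0∞)⁻¹) ^ (n + 1)) = 1 := by
  rw [ENNReal.tsum_geometric_add_one, ENNReal.one_sub_inv_two, inv_inv]
  exact ENNReal.inv_mul_cancel (by norm_num) (by norm_num)

lemma exists_open_superset_diam (hs : 0 < s) (U : Set X) (hU : EMetric.diam U ≠ ⊤)
    {c : ℝ≥0∞} (hc : 0 < c) :
    ∃ V, IsOpen V ∧ U ⊆ V ∧ EMetric.diam V ^ s ≤ EMetric.diam U ^ s + c := by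
  have h1 : Tendsto (fun η : ℝ≥0∞ => EMetric.diam U + η) (𝓝 0) (𝓝 (EMetric.diam U)) := by
    have := (continuous_add_left (EMetric.diam U)).tendsto (0 : ℝ≥0∞)
    simpa using this
  have hcont : Tendsto (fun η : ℝ≥0∞ => (EMetric.diam U + η) ^ s) (𝓝 0)
      (𝓝 (EMetric.diam U ^ s)) := (ENNReal.continuous_rpow_const.tendsto _).comp h1
  have hlt : EMetric.diam U ^ s < EMetric.diam U ^ s + c :=
    ENNReal.lt_add_right (ENNReal.rpow_lt_top_of_nonneg hs.le hU).ne hc.ne'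
  have hev : ∀ᶠ η in 𝓝 (0 : ℝ≥0∞), (EMetric.diam U + η) ^ s < EMetric.diam U ^ s + c :=
    hcont.eventually_lt_const hlt
  have hev2 : ∀ᶠ η in 𝓝[>] (0 : ℝ≥0∞), (EMetric.diam U + η) ^ s < EMetric.diam U ^ s + c :=
    hev.filter_mono nhdsWithin_le_nhds
  obtain ⟨η, hη, hηpos⟩ := (hev2.and self_mem_nhdsWithin).exists
  have hη2 : (0 : ℝ≥0∞) < η / 2 := ENNReal.half_pos (ne_of_gt hηpos)
  refine ⟨⋃ x ∈ U, EMetric.ball x (η / 2), isOpen_biUnion fun _ _ => EMetric.isOpen_ball,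
    fun x hx => mem_biUnion hx (EMetric.mem_ball_self hη2), ?_⟩
  have hdiam : EMetric.diam (⋃ x ∈ U, EMetric.ball x (η / 2)) ≤ EMetric.diam U + η := by
    refine EMetric.diam_le fun y hy y' hy' => ?_
    obtain ⟨x, hxU, hyx⟩ := mem_iUnion₂.1 hy
    obtain ⟨x', hx'U, hyx'⟩ := mem_iUnion₂.1 hy'
    calc edist y y' ≤ edist y x + edist x x' + edist x' y' := edist_triangle4 _ _ _ _
      _ ≤ η / 2 + EMetric.diam U + η / 2 := by
          gcongr
          · exact le_of_lt (EMetric.mem_ball.1 hyx)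
          · exact EMetric.edist_le_diam_of_mem hxU hx'U
          · exact le_of_lt (EMetric.mem_ball'.1 hyx')
      _ = EMetric.diam U + η := by
          rw [add_comm (η / 2), add_assoc, ENNReal.add_halves]
  exact (ENNReal.rpow_le_rpow hdiam hs.le).trans hη.le

lemma le_Mpre_iInter {Y : Type*} [MetricSpace Y] [CompactSpace Y] (hs : 0 < s) (K : ℕ → Set Y)
    (hanti : Antitone K) (hcl : ∀ i, IsClosed (K i)) {t : ℝ≥0∞}
    (ht : ∀ i, t ≤ Mpre s (K i)) : t ≤ Mpre s (⋂ i, K i) := by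
  refine ENNReal.le_of_forall_pos_le_add fun ε hε hfin => ?_
  set M := Mpre s (⋂ i, K i) with hM
  have hε2 : (0 : ℝ≥0∞) < (ε : ℝ≥0∞) / 2 := ENNReal.half_pos (by exact_mod_cast hε.ne')
  have h1 : M < M + (ε : ℝ≥0∞) / 2 := ENNReal.lt_add_right hfin.ne hε2.ne'
  obtain ⟨T, hTcov, hTsum⟩ := exists_cover_of_lt h1
  have hdiamT : ∀ n, EMetric.diam (T n) ≠ ⊤ := fun n =>
    ne_top_of_le_ne_top (isCompact_univ.isBounded.ediam_ne_top)
      (EMetric.diam_mono (subset_univ _))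
  have hcn : ∀ n : ℕ, (0 : ℝ≥0∞) < (ε : ℝ≥0∞) / 2 * (2 : ℝ≥0∞)⁻¹ ^ (n + 1) := by
    intro n
    refine ENNReal.mul_pos hε2.ne' ?_
    exact (ENNReal.pow_pos (by norm_num) _).ne'
  choose V hVopen hVsub hVdiam using fun n =>
    exists_open_superset_diam hs (T n) (hdiamT n) (hcn n)
  have hsum2 : ∑' n, EMetric.diam (V n) ^ s ≤ M + ε := by
    calc ∑' n, EMetric.diam (V n) ^ s
        ≤ ∑' n, (EMetric.diam (T n) ^ s + (ε : ℝ≥0∞) / 2 * (2 : ℝ≥0∞)⁻¹ ^ (n + 1)) :=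
          ENNReal.tsum_le_tsum fun n => hVdiam n
      _ = (∑' n, EMetric.diam (T n) ^ s) + (ε : ℝ≥0∞) / 2 * ∑' n, (2 : ℝ≥0∞)⁻¹ ^ (n + 1) := by
          rw [ENNReal.tsum_add, ENNReal.tsum_mul_left]
      _ = (∑' n, EMetric.diam (T n) ^ s) + (ε : ℝ≥0∞) / 2 := by rw [tsum_half_pow, mul_one]
      _ ≤ (M + (ε : ℝ≥0∞) / 2) + (ε : ℝ≥0∞) / 2 := add_le_add_left hTsum.le _
      _ = M + ε := by rw [add_assoc, ENNReal.add_halves]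
  have hdir : Directed (· ⊇ ·) K := fun i j =>
    ⟨max i j, hanti (le_max_left _ _), hanti (le_max_right _ _)⟩
  have hnhds : ∀ x ∈ ⋂ i, K i, (⋃ n, V n) ∈ 𝓝 x := by
    intro x hx
    refine (isOpen_iUnion hVopen).mem_nhds ?_
    obtain ⟨n, hn⟩ := mem_iUnion.1 (hTcov hx)
    exact mem_iUnion.2 ⟨n, hVsub n hn⟩
  obtain ⟨i, hi⟩ := exists_subset_nhds_of_isCompact' hdir
      (fun i => (hcl i).isCompact) hcl hnhds
  exact (ht i).trans ((Mpre_le_sum V hi).trans hsum2)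


lemma forall_le_of_one_div {a b : ℝ} (h : ∀ i : ℕ, a - 1/(i+1) ≤ b) : a ≤ b := by
  by_contra hlt
  push_neg at hlt
  obtain ⟨n, hn⟩ := exists_nat_one_div_lt (sub_pos.2 hlt)
  have := h n
  linarith

section Levels

variable {Y : Type*} [MetricSpace Y] [CompactSpace Y]

lemma iInter_Icc_preimage (f : Y → ℝ) (r σ : ℝ) :
    (⋂ i : ℕ, f ⁻¹' Icc (r - σ - 1/(i+1)) (r + σ + 1/(i+1))) = f ⁻¹' Icc (r - σ) (r + σ) := by
  ext x
  simp only [mem_iInter, mem_preimage, mem_Icc]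
  constructor
  · intro h
    constructor
    · exact forall_le_of_one_div fun i => by have := (h i).1; linarith
    · exact forall_le_of_one_div (a := f x) (b := r + σ) fun i => by have := (h i).2; linarith
  · intro h i
    have hpos : (0:ℝ) < 1/((i:ℝ)+1) := by positivity
    constructor <;> [linarith [h.1]; linarith [h.2]]

lemma iInter_Icc_preimage' (f : Y → ℝ) (r : ℝ) :
    (⋂ i : ℕ, f ⁻¹' Icc (r - 1/(i+1)) (r + 1/(i+1))) = f ⁻¹' {r} := by
  have := iInter_Icc_preimage f r 0
  simp only [sub_zero, add_zero] at this
  calc (⋂ i : ℕ, f ⁻¹' Icc (r - 1/(i+1)) (r + 1/(i+1)))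
      = ⋂ i : ℕ, f ⁻¹' Icc (r - 0 - 1/(i+1)) (r + 0 + 1/(i+1)) := by
        simp only [sub_zero, add_zero]
    _ = f ⁻¹' Icc r r := by rw [iInter_Icc_preimage f r 0]; simp
    _ = f ⁻¹' {r} := by rw [Icc_self]

lemma isClosed_level_Icc {f : Y → ℝ} (hf : Continuous f) (hs : 0 < s) {σ : ℝ} {t : ℝ≥0∞} :
    IsClosed {r : ℝ | t ≤ Mpre s (f ⁻¹' Icc (r - σ) (r + σ))} := by
  refine isClosed_of_closure_subset fun r hr => ?_
  set K : ℕ → Set Y := fun i => f ⁻¹' Icc (r - σ - 1/(i+1)) (r + σ + 1/(i+1)) with hK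
  have hanti : Antitone K := by
    intro i j hij
    refine preimage_mono (Icc_subset_Icc ?_ ?_)
    · have : 1/((j:ℝ)+1) ≤ 1/((i:ℝ)+1) := by
        apply one_div_le_one_div_of_le (by positivity)
        exact_mod_cast Nat.succ_le_succ hij
      linarith
    · have : 1/((j:ℝ)+1) ≤ 1/((i:ℝ)+1) := by
        apply one_div_le_one_div_of_le (by positivity)
        exact_mod_cast Nat.succ_le_succ hij
      linarith
  have hcl : ∀ i, IsClosed (K i) := fun i => isClosed_Icc.preimage hf
  have hKi : ∀ i, t ≤ Mpre s (K i) := by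
    intro i
    have hpos : (0:ℝ) < 1/((i:ℝ)+1) := by positivity
    obtain ⟨r', hr', hdist⟩ := Metric.mem_closure_iff.1 hr _ hpos
    rw [Real.dist_eq] at hdist
    have habs := abs_sub_lt_iff.1 hdist
    refine le_trans hr' (Mpre_mono (preimage_mono (Icc_subset_Icc ?_ ?_))) <;>
      [linarith [habs.1, habs.2]; linarith [habs.1, habs.2]]
  have key := le_Mpre_iInter hs K hanti hcl hKi
  rwa [hK, iInter_Icc_preimage] at key


variable (Y) in
/-- Levels whose thickened preimage has premeasure at least `t` in some dimension `sfun j`,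
`j ≤ J`. -/
def Aset (f : Y → ℝ) (sfun : ℕ → ℝ) (J : ℕ) (t : ℝ≥0∞) (σ : ℝ) : Set ℝ :=
  {r | ∃ j ≤ J, t ≤ Mpre (sfun j) (f ⁻¹' Icc (r - σ) (r + σ))}

variable (Y) in
/-- Levels whose fiber has premeasure at least `t` in some dimension `sfun j`, `j ≤ J`. -/
def A0set (f : Y → ℝ) (sfun : ℕ → ℝ) (J : ℕ) (t : ℝ≥0∞) : Set ℝ :=
  {r | ∃ j ≤ J, t ≤ Mpre (sfun j) (f ⁻¹' {r})}

lemma Aset_mono {f : Y → ℝ} {sfun : ℕ → ℝ} {J : ℕ} {t : ℝ≥0∞} {σ σ' : ℝ} (h : σ ≤ σ') :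
    Aset Y f sfun J t σ ⊆ Aset Y f sfun J t σ' := by
  rintro r ⟨j, hj, hm⟩
  exact ⟨j, hj, hm.trans (Mpre_mono (preimage_mono (Icc_subset_Icc (by linarith) (by linarith))))⟩

lemma isClosed_Aset {f : Y → ℝ} (hf : Continuous f) {sfun : ℕ → ℝ} (hsfun : ∀ j, 0 < sfun j)
    {J : ℕ} {t : ℝ≥0∞} {σ : ℝ} : IsClosed (Aset Y f sfun J t σ) := by
  have : Aset Y f sfun J t σ =
      ⋃ j ∈ Finset.range (J+1), {r | t ≤ Mpre (sfun j) (f ⁻¹' Icc (r - σ) (r + σ))} := by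
    ext r
    simp only [Aset, mem_setOf_eq, mem_iUnion, Finset.mem_range, Nat.lt_succ_iff, exists_prop]
  rw [this]
  exact isClosed_biUnion_finset fun j _ => isClosed_level_Icc hf (hsfun j)

lemma Aset_subset_Icc {f : Y → ℝ} {C : ℝ} (hC : ∀ x, |f x| ≤ C) {sfun : ℕ → ℝ}
    (hsfun : ∀ j, 0 < sfun j) {J : ℕ} {t : ℝ≥0∞} (ht : 0 < t) {σ : ℝ} :
    Aset Y f sfun J t σ ⊆ Icc (-C - σ) (C + σ) := by
  rintro r ⟨j, hj, hm⟩
  obtain ⟨x, hx⟩ := nonempty_of_Mpre_ne_zero (hsfun j) (fun h0 => by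
    rw [h0] at hm; exact ht.ne' (le_antisymm hm zero_le))
  rw [mem_preimage, mem_Icc] at hx
  have := abs_le.1 (hC x)
  exact mem_Icc.2 ⟨by linarith [hx.2], by linarith [hx.1]⟩

lemma volume_Aset_lt_top {f : Y → ℝ} {C : ℝ} (hC : ∀ x, |f x| ≤ C) {sfun : ℕ → ℝ}
    (hsfun : ∀ j, 0 < sfun j) {J : ℕ} {t : ℝ≥0∞} (ht : 0 < t) {σ : ℝ} :
    volume (Aset Y f sfun J t σ) < ⊤ :=
  lt_of_le_of_lt (measure_mono (Aset_subset_Icc hC hsfun ht))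
    (by rw [Real.volume_Icc]; exact ENNReal.ofReal_lt_top)

lemma iInter_Aset_subset {f : Y → ℝ} (hf : Continuous f) {sfun : ℕ → ℝ}
    (hsfun : ∀ j, 0 < sfun j) {J : ℕ} {t : ℝ≥0∞} :
    (⋂ i : ℕ, Aset Y f sfun J t (1/(i+1))) ⊆ A0set Y f sfun J t := by
  intro r hr
  rw [mem_iInter] at hr
  -- pigeonhole : one fixed j ≤ J works for every i
  have claim : ∃ j ≤ J, ∀ i : ℕ, t ≤ Mpre (sfun j) (f ⁻¹' Icc (r - 1/(i+1)) (r + 1/(i+1))) := by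
    by_contra hcon
    push_neg at hcon
    have hcon' : ∀ j : ℕ, j ≤ J → ∃ i : ℕ,
        ¬ t ≤ Mpre (sfun j) (f ⁻¹' Icc (r - 1/(i+1)) (r + 1/(i+1))) := by
      intro j hj
      obtain ⟨i, hi⟩ := hcon j hj
      exact ⟨i, not_le.2 hi⟩
    choose idx hidx using hcon'
    set I : ℕ := (Finset.range (J+1)).sup (fun j => if h : j ≤ J then idx j h else 0) with hI
    obtain ⟨j, hjJ, hj⟩ := hr I
    have hjI : idx j hjJ ≤ I := by
      have hmem : j ∈ Finset.range (J+1) := Finset.mem_range.2 (Nat.lt_succ_of_le hjJ)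
      have := Finset.le_sup (f := fun j => if h : j ≤ J then idx j h else 0) hmem
      simpa [hjJ] using this
    have hsub : f ⁻¹' Icc (r - 1/(I+1)) (r + 1/(I+1)) ⊆
        f ⁻¹' Icc (r - 1/(idx j hjJ + 1)) (r + 1/(idx j hjJ + 1)) := by
      refine preimage_mono (Icc_subset_Icc ?_ ?_) <;>
      · have : 1/((I:ℝ)+1) ≤ 1/((idx j hjJ : ℝ)+1) := by
          apply one_div_le_one_div_of_le (by positivity)
          exact_mod_cast Nat.succ_le_succ hjI
        linarith
    exact hidx j hjJ (hj.trans (Mpre_mono hsub))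
  obtain ⟨j, hjJ, hj⟩ := claim
  refine ⟨j, hjJ, ?_⟩
  have hanti : Antitone (fun i : ℕ => f ⁻¹' Icc (r - 1/(i+1)) (r + 1/(i+1))) := by
    intro i j' hij
    refine preimage_mono (Icc_subset_Icc ?_ ?_) <;>
    · have : 1/((j':ℝ)+1) ≤ 1/((i:ℝ)+1) := by
        apply one_div_le_one_div_of_le (by positivity)
        exact_mod_cast Nat.succ_le_succ hij
      linarith
  have key := le_Mpre_iInter (hsfun j) _ hanti (fun i => isClosed_Icc.preimage hf) hj
  rwa [iInter_Icc_preimage'] at key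


lemma exists_sigma {f : Y → ℝ} (hf : Continuous f) {C : ℝ} (hC : ∀ x, |f x| ≤ C)
    {sfun : ℕ → ℝ} (hsfun : ∀ j, 0 < sfun j) (J : ℕ) {t : ℝ≥0∞} (ht : 0 < t) (i : ℕ) :
    ∃ σ : ℝ, 0 < σ ∧ σ ≤ 1/(i+1) ∧
      volume (Aset Y f sfun J t σ) ≤ volume (A0set Y f sfun J t) + ENNReal.ofReal (1/(i+1)) := by
  have hseq : Antitone (fun k : ℕ => Aset Y f sfun J t (1/(k+1))) := by
    intro k k' hkk'
    refine Aset_mono ?_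
    apply one_div_le_one_div_of_le (by positivity)
    exact_mod_cast Nat.succ_le_succ hkk'
  have hfin0 : volume ((fun k : ℕ => Aset Y f sfun J t (1/(k+1))) 0) ≠ ⊤ :=
    (volume_Aset_lt_top hC hsfun ht).ne
  have hiInf : volume (⋂ k : ℕ, Aset Y f sfun J t (1/(k+1)))
      = ⨅ k : ℕ, volume (Aset Y f sfun J t (1/(k+1))) :=
    hseq.measure_iInter (fun k => (isClosed_Aset hf hsfun).nullMeasurableSet) ⟨0, hfin0⟩
  have hLfin : volume (⋂ k : ℕ, Aset Y f sfun J t (1/(k+1))) ≠ ⊤ :=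
    ne_top_of_le_ne_top hfin0 (measure_mono (iInter_subset _ 0))
  have hlt : (⨅ k : ℕ, volume (Aset Y f sfun J t (1/(k+1)))) <
      volume (⋂ k : ℕ, Aset Y f sfun J t (1/(k+1))) + ENNReal.ofReal (1/(i+1)) := by
    rw [← hiInf]
    refine ENNReal.lt_add_right hLfin ?_
    simp only [ne_eq, ENNReal.ofReal_eq_zero, not_le]
    positivity
  obtain ⟨k, hk⟩ := iInf_lt_iff.1 hlt
  refine ⟨min (1/(k+1)) (1/(i+1)), lt_min (by positivity) (by positivity), min_le_right _ _, ?_⟩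
  calc volume (Aset Y f sfun J t (min (1/(k+1)) (1/(i+1))))
      ≤ volume (Aset Y f sfun J t (1/(k+1))) := measure_mono (Aset_mono (min_le_left _ _))
    _ ≤ volume (⋂ k : ℕ, Aset Y f sfun J t (1/(k+1))) + ENNReal.ofReal (1/(i+1)) := hk.le
    _ ≤ volume (A0set Y f sfun J t) + ENNReal.ofReal (1/(i+1)) :=
        add_le_add_left (measure_mono (iInter_Aset_subset hf hsfun)) _

end Levels

end Stmt18Aux

open Stmt18Aux in
theorem stmt18 (p : ℕ) (F : Set (Euc p)) (hF : IsCompact F)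
    (α : ℝ) (hα : 0 < α) (hα1 : α ≤ 1)
    (δ₀ κ₀ : ℝ) (hδ₀ : 0 < δ₀) (hκ₀0 : 0 < κ₀) (hκ₀1 : κ₀ < 1)
    (f : ℕ → HolderBall p α F) (hdense : Dense (Set.range f))
    (hκ : ∀ n, kappa (fun x : ↥F => (f n).1 x) (DstarAlpha p α F) δ₀ < κ₀) :
    ∃ G : Set (HolderBall p α F), Dense G ∧ IsGδ G ∧
      ∀ g ∈ G, kappa (fun x : ↥F => g.1 x) (DstarAlpha p α F) δ₀ ≤ κ₀ := by
  classical
  haveI hcs : CompactSpace ↥F := isCompact_iff_compactSpace.mp hF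
  -- the space of Hölder functions is complete, hence Baire
  have hclosed : IsClosed {h : BoundedContinuousFunction ↥F ℝ |
      ∀ x y : ↥F, |h x - h y| ≤ dist x y ^ α} := by
    have heq : {h : BoundedContinuousFunction ↥F ℝ | ∀ x y : ↥F, |h x - h y| ≤ dist x y ^ α} =
        ⋂ (x : ↥F) (y : ↥F),
          {h : BoundedContinuousFunction ↥F ℝ | |h x - h y| ≤ dist x y ^ α} := by
      ext h; simp only [mem_setOf_eq, mem_iInter]
    rw [heq]
    refine isClosed_iInter fun x => isClosed_iInter fun y => ?_
    exact isClosed_le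
      ((continuous_eval_const (x := x)).sub
        (continuous_eval_const (x := y))).abs continuous_const
  haveI : CompleteSpace (HolderBall p α F) := hclosed.completeSpace_coe
  set D := DstarAlpha p α F with hD
  set c : ℝ := D - δ₀ with hc
  set sfun : ℕ → ℝ := fun j => max c 0 + 1/(j+1) with hsfun_def
  have hsfun : ∀ j, 0 < sfun j := fun j =>
    add_pos_of_nonneg_of_pos (le_max_right _ _) (by positivity)
  have hofReal_c : ENNReal.ofReal c = ENNReal.ofReal (max c 0) := by
    rcases le_total c 0 with h | h
    · rw [ENNReal.ofReal_eq_zero.2 h, max_eq_right h, ENNReal.ofReal_zero]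
    · rw [max_eq_left h]
  have hofReal_lt : ∀ j : ℕ, ENNReal.ofReal c < ENNReal.ofReal (sfun j) := by
    intro j
    rw [hofReal_c]
    rw [ENNReal.ofReal_lt_ofReal_iff (hsfun j)]
    have : (0:ℝ) < 1/((j:ℝ)+1) := by positivity
    simp only [hsfun_def]
    linarith
  -- the "bad" level sets
  set bad : HolderBall p α F → Set ℝ := fun h =>
    {r ∈ Set.range (fun x : ↥F => h.1 x) |
      ENNReal.ofReal (D - δ₀) < dimH ((fun x : ↥F => h.1 x) ⁻¹' {r})} with hbad_def
  have htpos : ∀ m : ℕ, (0:ℝ≥0∞) < ((m:ℝ≥0∞)+1)⁻¹ := fun m =>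
    ENNReal.inv_pos.2 (by simp)
  -- A0set is contained in the bad set
  have hA0 : ∀ (h : HolderBall p α F) (m : ℕ),
      A0set ↥F (fun x : ↥F => h.1 x) sfun m ((m:ℝ≥0∞)+1)⁻¹ ⊆ bad h := by
    rintro h m r ⟨j, hjm, hjM⟩
    have hMne : Mpre (sfun j) ((fun x : ↥F => h.1 x) ⁻¹' {r}) ≠ 0 := by
      intro h0
      rw [h0] at hjM
      exact (htpos m).ne' (le_antisymm hjM zero_le)
    obtain ⟨x, hx⟩ := nonempty_of_Mpre_ne_zero (hsfun j) hMne
    refine ⟨⟨x, hx⟩, ?_⟩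
    calc ENNReal.ofReal (D - δ₀) = ENNReal.ofReal c := by rw [hc]
      _ < ENNReal.ofReal (sfun j) := hofReal_lt j
      _ ≤ dimH ((fun x : ↥F => h.1 x) ⁻¹' {r}) :=
          ofReal_le_dimH_of_Mpre_ne_zero (hsfun j) hMne
  -- measure of the bad set of each fₙ
  have hbadvol : ∀ n : ℕ,
      volume (bad (f n)) ≤ ENNReal.ofReal κ₀ * volume (Set.range (fun x : ↥F => (f n).1 x)) := by
    intro n
    have hκn := hκ n
    simp only [kappa] at hκn
    set N := volume {r ∈ Set.range (fun x : ↥F => (f n).1 x) |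
      ENNReal.ofReal (D - δ₀) < dimH ((fun x : ↥F => (f n).1 x) ⁻¹' {r})} with hN
    set V := volume (Set.range (fun x : ↥F => (f n).1 x)) with hV
    have hVfin : V ≠ ⊤ := by
      rw [hV]
      exact (IsCompact.measure_lt_top (isCompact_range (map_continuous (f n).1))).ne
    have hNsub : N ≤ V := by
      rw [hN, hV]
      exact measure_mono (sep_subset _ _)
    rcases eq_or_ne V 0 with hV0 | hV0
    · calc N ≤ V := hNsub
        _ = 0 := hV0
        _ ≤ _ := zero_le
    · have hVpos : 0 < V.toReal := ENNReal.toReal_pos hV0 hVfin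
      rw [div_lt_iff₀ hVpos] at hκn
      have hNfin : N ≠ ⊤ := ne_top_of_le_ne_top hVfin hNsub
      calc N = ENNReal.ofReal N.toReal := (ENNReal.ofReal_toReal hNfin).symm
        _ ≤ ENNReal.ofReal (κ₀ * V.toReal) := ENNReal.ofReal_le_ofReal hκn.le
        _ = ENNReal.ofReal κ₀ * ENNReal.ofReal V.toReal := ENNReal.ofReal_mul hκ₀0.le
        _ = ENNReal.ofReal κ₀ * V := by rw [ENNReal.ofReal_toReal hVfin]
  -- choose the radii
  have hchoice : ∀ n m i : ℕ, ∃ σ : ℝ, 0 < σ ∧ σ ≤ 1/(i+1) ∧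
      volume (Aset ↥F (fun x : ↥F => (f n).1 x) sfun m ((m:ℝ≥0∞)+1)⁻¹ σ) ≤
        volume (bad (f n)) + ENNReal.ofReal (1/(i+1)) := by
    intro n m i
    have hCbound : ∀ x : ↥F, |(fun x : ↥F => (f n).1 x) x| ≤ ‖(f n).1‖ := fun x => by
      simpa [Real.norm_eq_abs] using (f n).1.norm_coe_le_norm x
    obtain ⟨σ, h1, h2, h3⟩ := exists_sigma (map_continuous (f n).1) hCbound hsfun m
      (htpos m) i
    refine ⟨σ, h1, h2, h3.trans (add_le_add_left (measure_mono (hA0 (f n) m)) _)⟩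
  choose σfun hσpos hσle hσvol using hchoice
  -- the dense Gδ set
  refine ⟨⋂ q : ℕ × ℕ, ⋃ n : ℕ, Metric.ball (f n) (σfun n q.1 q.2), ?_, ?_, ?_⟩
  · refine dense_iInter_of_isOpen (fun q => isOpen_iUnion fun n => Metric.isOpen_ball)
      (fun q => hdense.mono ?_)
    rintro _ ⟨n, rfl⟩
    exact mem_iUnion.2 ⟨n, Metric.mem_ball_self (hσpos n q.1 q.2)⟩
  · exact IsGδ.iInter fun q => (isOpen_iUnion fun n => Metric.isOpen_ball).isGδ
  · intro g hg
    set Vg := Set.range (fun x : ↥F => g.1 x) with hVg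
    have hVgcomp : IsCompact Vg := isCompact_range (map_continuous g.1)
    set S : ℕ → Set ℝ := fun m =>
      {r | ∃ j ≤ m, ((m:ℝ≥0∞)+1)⁻¹ ≤ Mpre (sfun j) ((fun x : ↥F => g.1 x) ⁻¹' {r})} with hSdef
    have hclaim1 : bad g ⊆ ⋃ m, S m := by
      rintro r ⟨hr1, hr2⟩
      have hr2' : ENNReal.ofReal (max c 0) < dimH ((fun x : ↥F => g.1 x) ⁻¹' {r}) := by
        rw [← hofReal_c, hc]; exact hr2
      have htend : Tendsto (fun j : ℕ => ENNReal.ofReal (sfun j)) atTop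
          (𝓝 (ENNReal.ofReal (max c 0))) := by
        apply ENNReal.tendsto_ofReal
        have h0 : Tendsto (fun j : ℕ => max c 0 + 1/(j+1)) atTop (𝓝 (max c 0 + 0)) :=
          tendsto_const_nhds.add tendsto_one_div_add_atTop_nhds_zero_nat
        simpa [hsfun_def] using h0
      obtain ⟨j, hj⟩ := (htend.eventually_lt_const hr2').exists
      have hMpos := Mpre_pos_of_lt_dimH (hsfun j) hj
      obtain ⟨k, hk⟩ := ENNReal.exists_inv_nat_lt hMpos.ne'
      refine mem_iUnion.2 ⟨max j k, j, le_max_left _ _, ?_⟩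
      calc (((max j k : ℕ):ℝ≥0∞) + 1)⁻¹ ≤ ((k:ℕ):ℝ≥0∞)⁻¹ := by
            apply ENNReal.inv_le_inv.2
            have hkk : (k:ℕ) ≤ max j k + 1 := (le_max_right j k).trans (Nat.le_succ _)
            exact_mod_cast hkk
        _ ≤ Mpre (sfun j) ((fun x : ↥F => g.1 x) ⁻¹' {r}) := hk.le
    have hSmono : Monotone S := by
      intro m m' hmm' r hr
      obtain ⟨j, hjm, hjM⟩ := hr
      refine ⟨j, hjm.trans hmm', le_trans ?_ hjM⟩
      apply ENNReal.inv_le_inv.2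
      have h1 : (m:ℕ) + 1 ≤ m' + 1 := Nat.succ_le_succ hmm'
      exact_mod_cast h1
    have htend0' : Tendsto (fun i : ℕ => ENNReal.ofReal (1/(i+1))) atTop (𝓝 0) := by
      simpa using ENNReal.tendsto_ofReal tendsto_one_div_add_atTop_nhds_zero_nat
    have hclaim3 : ∀ m, volume (S m) ≤ ENNReal.ofReal κ₀ * volume Vg := by
      intro m
      have hThanti : Antitone (fun i : ℕ => Metric.cthickening (1/(i+1)) Vg) := by
        intro i i' hii'
        apply Metric.cthickening_mono
        apply one_div_le_one_div_of_le (by positivity)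
        exact_mod_cast Nat.succ_le_succ hii'
      have hThfin : volume ((fun i : ℕ => Metric.cthickening (1/(i+1)) Vg) 0) ≠ ⊤ := by
        have hb : Bornology.IsBounded (Metric.cthickening (1/(((0:ℕ):ℝ)+1)) Vg) :=
          hVgcomp.isBounded.cthickening
        have hcomp : IsCompact (closure (Metric.cthickening (1/(((0:ℕ):ℝ)+1)) Vg)) :=
          hb.isCompact_closure
        exact ne_top_of_le_ne_top hcomp.measure_lt_top.ne (measure_mono subset_closure)
      have hThnull : ∀ i : ℕ, NullMeasurableSet (Metric.cthickening (1/(i+1)) Vg) volume :=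
        fun i => Metric.isClosed_cthickening.measurableSet.nullMeasurableSet
      have hThiInter : (⋂ i : ℕ, Metric.cthickening (1/(i+1)) Vg) = Vg := by
        refine subset_antisymm ?_ (subset_iInter fun i => Metric.self_subset_cthickening _)
        intro x hx
        rw [mem_iInter] at hx
        have hxle : ∀ i : ℕ, EMetric.infEdist x Vg ≤ ENNReal.ofReal (1/(i+1)) :=
          fun i => Metric.mem_cthickening_iff.1 (hx i)
        have hxz : EMetric.infEdist x Vg = 0 :=
          le_antisymm (ge_of_tendsto' htend0' hxle) zero_le
        have hxcl : x ∈ closure Vg := EMetric.mem_closure_iff_infEdist_zero.2 hxz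
        rwa [hVgcomp.isClosed.closure_eq] at hxcl
      have htendTh : Tendsto (fun i : ℕ => volume (Metric.cthickening (1/(i+1)) Vg)) atTop
          (𝓝 (volume Vg)) := by
        have h := tendsto_measure_iInter_atTop hThnull hThanti ⟨0, hThfin⟩
        rw [hThiInter] at h
        exact h
      have hbound : ∀ i : ℕ, volume (S m) ≤
          ENNReal.ofReal κ₀ * volume (Metric.cthickening (1/(i+1)) Vg)
            + ENNReal.ofReal (1/(i+1)) := by
        intro i
        obtain ⟨n, hn⟩ := mem_iUnion.1 (mem_iInter.1 hg (m, i))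
        rw [Metric.mem_ball] at hn
        have hsubA : S m ⊆ Aset ↥F (fun x : ↥F => (f n).1 x) sfun m ((m:ℝ≥0∞)+1)⁻¹
            (σfun n m i) := by
          rintro r ⟨j, hjm, hjM⟩
          refine ⟨j, hjm, le_trans hjM (Mpre_mono ?_)⟩
          intro x hx
          rw [mem_preimage, mem_singleton_iff] at hx
          rw [mem_preimage, mem_Icc]
          have h1 : dist ((f n).1 x) (g.1 x) ≤ dist (f n) g :=
            BoundedContinuousFunction.dist_coe_le_dist x
          have h2 : dist ((f n).1 x) (g.1 x) < σfun n m i := by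
            rw [dist_comm] at hn
            exact lt_of_le_of_lt h1 hn
          rw [Real.dist_eq] at h2
          have h3 := abs_sub_lt_iff.1 h2
          rw [hx] at h3
          constructor <;> [linarith [h3.2]; linarith [h3.1]]
        calc volume (S m)
            ≤ volume (Aset ↥F (fun x : ↥F => (f n).1 x) sfun m ((m:ℝ≥0∞)+1)⁻¹ (σfun n m i)) :=
              measure_mono hsubA
          _ ≤ volume (bad (f n)) + ENNReal.ofReal (1/(i+1)) := hσvol n m i
          _ ≤ ENNReal.ofReal κ₀ * volume (Set.range (fun x : ↥F => (f n).1 x))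
                + ENNReal.ofReal (1/(i+1)) := add_le_add_left (hbadvol n) _
          _ ≤ ENNReal.ofReal κ₀ * volume (Metric.cthickening (1/(i+1)) Vg)
                + ENNReal.ofReal (1/(i+1)) := by
              refine add_le_add_left (mul_le_mul_right (measure_mono ?_) _) _
              rintro _ ⟨x, rfl⟩
              refine Metric.mem_cthickening_of_dist_le _ (g.1 x) _ _ ⟨x, rfl⟩ ?_
              have h1 : dist ((f n).1 x) (g.1 x) ≤ dist (f n) g :=
                BoundedContinuousFunction.dist_coe_le_dist x
              have h2 : dist ((f n).1 x) (g.1 x) < σfun n m i := by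
                rw [dist_comm] at hn
                exact lt_of_le_of_lt h1 hn
              exact h2.le.trans (hσle n m i)
      have hRHS : Tendsto (fun i : ℕ => ENNReal.ofReal κ₀ *
          volume (Metric.cthickening (1/(i+1)) Vg) + ENNReal.ofReal (1/(i+1))) atTop
          (𝓝 (ENNReal.ofReal κ₀ * volume Vg + 0)) :=
        (ENNReal.Tendsto.const_mul htendTh (Or.inr ENNReal.ofReal_ne_top)).add htend0'
      exact ge_of_tendsto' (by simpa using hRHS) hbound
    have hkey : volume (bad g) ≤ ENNReal.ofReal κ₀ * volume Vg := by
      calc volume (bad g) ≤ volume (⋃ m, S m) := measure_mono hclaim1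
        _ = ⨆ m, volume (S m) := hSmono.measure_iUnion
        _ ≤ ENNReal.ofReal κ₀ * volume Vg := iSup_le hclaim3
    show kappa (fun x : ↥F => g.1 x) D δ₀ ≤ κ₀
    have hkap : kappa (fun x : ↥F => g.1 x) D δ₀
        = (volume (bad g)).toReal / (volume Vg).toReal := rfl
    rw [hkap]
    rcases eq_or_ne (volume Vg) 0 with hV0 | hV0
    · rw [hV0]
      simp [hκ₀0.le]
    · have hVfin : volume Vg ≠ ⊤ := hVgcomp.measure_lt_top.ne
      rw [div_le_iff₀ (ENNReal.toReal_pos hV0 hVfin)]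
      have hmono := ENNReal.toReal_mono (ENNReal.mul_ne_top ENNReal.ofReal_ne_top hVfin) hkey
      rwa [ENNReal.toReal_mul, ENNReal.toReal_ofReal hκ₀0.le] at hmono
end
end
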